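/- arXiv:2308.16815 — 5 statements merged into one kernel-verified Lean document; each statement's English description precedes it below -/
import Mathlib

section
/- For a smooth nonvanishing function r : ℝ → ℂ and N ≥ 1, the N-th power of the operator ∂ₓ ∘ r(x)⁻¹ can be written as r(x)^{-N} · Σ_{j=0}^{N} b_{jN}(x) ∂ₓ^j where the coefficient functions satisfy |b_{jN}(x)| ≲ Σ_{k=1}^{N-j} Σ_{ℓ₁+⋯+ℓ_k = N-j, ℓᵢ ≥ 1} ∏_{i=1}^{k} |r^{(ℓᵢ)}(x)|/|r(x)|, and b_{NN}(x) = 1. -/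
open scoped BigOperators

/-- The operator `L = ∂ₓ ∘ r(x)⁻¹`, sending `u` to the derivative of `u / r`. -/
noncomputable def Lop (r : ℝ → ℂ) (u : ℝ → ℂ) : ℝ → ℂ :=
  deriv (fun x => u x / r x)

namespace PDICE

/-- all single-increment variants of a list -/
def bumps : List ℕ → List (List ℕ)
  | [] => []
  | ℓ :: L => ((ℓ+1) :: L) :: (bumps L).map (ℓ :: ·)

/-- formal derivative on formal sums of products -/
def Dform (T : List (ℂ × List ℕ)) : List (ℂ × List ℕ) :=
  T.flatMap fun p => ((bumps p.2).map fun M => (p.1, M)) ++ [(-(p.2.length : ℂ) * p.1, 1 :: p.2)]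

/-- the combinatorial coefficients -/
def Tfun : ℕ → ℕ → List (ℂ × List ℕ)
  | 0, j => if j = 0 then [(1, [])] else []
  | (N+1), j => Dform (Tfun N j) ++ ((Tfun N j).map fun p => (-(N+1 : ℂ) * p.1, 1 :: p.2))
      ++ (if j = 0 then [] else Tfun N (j-1))

lemma Tfun_eq_nil : ∀ N j, N < j → Tfun N j = [] := by
  intro N
  induction N with
  | zero => intro j hj; have : j ≠ 0 := by omega
            simp [Tfun, this]
  | succ N ih =>
      intro j hj
      have h1 : Tfun N j = [] := ih j (by omega)
      have h2 : Tfun N (j-1) = [] := ih (j-1) (by omega)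
      have hj0 : j ≠ 0 := by omega
      simp [Tfun, h1, h2, hj0, Dform]

lemma Tfun_diag : ∀ N, Tfun N N = [(1, [])] := by
  intro N
  induction N with
  | zero => simp [Tfun]
  | succ N ih =>
      have h1 : Tfun N (N+1) = [] := Tfun_eq_nil N (N+1) (by omega)
      simp [Tfun, h1, Dform, ih]

lemma mem_bumps_sum {L M : List ℕ} (h : M ∈ bumps L) : M.sum = L.sum + 1 := by
  induction L generalizing M with
  | nil => simp [bumps] at h
  | cons ℓ L ih =>
      simp only [bumps, List.mem_cons, List.mem_map] at h
      rcases h with rfl | ⟨M', hM', rfl⟩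
      · simp [List.sum_cons]; ring
      · simp [List.sum_cons, ih hM']; ring

lemma mem_bumps_pos {L M : List ℕ} (h : M ∈ bumps L) (hL : ∀ ℓ ∈ L, 1 ≤ ℓ) :
    ∀ ℓ ∈ M, 1 ≤ ℓ := by
  induction L generalizing M with
  | nil => simp [bumps] at h
  | cons a L ih =>
      simp only [bumps, List.mem_cons, List.mem_map] at h
      rcases h with rfl | ⟨M', hM', rfl⟩
      · intro ℓ hℓ
        rcases List.mem_cons.mp hℓ with rfl | hℓ
        · omega
        · exact hL ℓ (List.mem_cons_of_mem _ hℓ)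
      · intro ℓ hℓ
        rcases List.mem_cons.mp hℓ with rfl | hℓ
        · exact hL ℓ (List.mem_cons_self)
        · exact ih hM' (fun m hm => hL m (List.mem_cons_of_mem _ hm)) ℓ hℓ

/-- invariant: entries positive and summing to `N - j` -/
lemma mem_Tfun {N j : ℕ} (hj : j ≤ N) {p : ℂ × List ℕ} (hp : p ∈ Tfun N j) :
    (∀ ℓ ∈ p.2, 1 ≤ ℓ) ∧ p.2.sum = N - j := by
  induction N generalizing j p with
  | zero =>
      interval_cases j
      simp [Tfun] at hp
      subst hp
      simp
  | succ N ih =>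
      rw [Tfun] at hp
      rw [List.append_assoc, List.mem_append, List.mem_append] at hp
      rcases hp with hp | hp | hp
      · -- Dform part
        by_cases hjN : j ≤ N
        · simp only [Dform, List.mem_flatMap, List.mem_append, List.mem_map,
            List.mem_singleton] at hp
          obtain ⟨q, hq, hcase⟩ := hp
          obtain ⟨hqpos, hqsum⟩ := ih hjN hq
          rcases hcase with ⟨M, hM, rfl⟩ | rfl
          · exact ⟨mem_bumps_pos hM hqpos, by rw [mem_bumps_sum hM, hqsum]; omega⟩
          · refine ⟨?_, ?_⟩
            · intro ℓ hℓ
              rcases List.mem_cons.mp hℓ with rfl | hℓ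
              · exact le_refl 1
              · exact hqpos ℓ hℓ
            · show (1 :: q.2).sum = N + 1 - j
              rw [List.sum_cons, hqsum]; omega
        · rw [Tfun_eq_nil N j (by omega)] at hp
          simp [Dform] at hp
      · by_cases hjN : j ≤ N
        · simp only [List.mem_map] at hp
          obtain ⟨q, hq, rfl⟩ := hp
          obtain ⟨hqpos, hqsum⟩ := ih hjN hq
          refine ⟨?_, by show (1 :: q.2).sum = N + 1 - j; rw [List.sum_cons, hqsum]; omega⟩
          intro ℓ hℓ
          rcases List.mem_cons.mp hℓ with rfl | hℓ
          · exact le_refl 1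
          · exact hqpos ℓ hℓ
        · rw [Tfun_eq_nil N j (by omega)] at hp; simp at hp
      · by_cases hj0 : j = 0
        · simp [hj0] at hp
        · rw [if_neg hj0] at hp
          obtain ⟨hqpos, hqsum⟩ := ih (by omega) hp
          exact ⟨hqpos, by omega⟩


variable (r : ℝ → ℂ)

noncomputable def Q (ℓ : ℕ) (x : ℝ) : ℂ := iteratedDeriv ℓ r x / r x

noncomputable def W (L : List ℕ) (x : ℝ) : ℂ := (L.map fun ℓ => Q r ℓ x).prod

noncomputable def ev (T : List (ℂ × List ℕ)) (x : ℝ) : ℂ :=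
  (T.map fun p => p.1 * W r p.2 x).sum

variable {r} (hr : ContDiff ℝ (⊤ : ℕ∞) r) (hr0 : ∀ x, r x ≠ 0)
include hr hr0

omit hr0 in
lemma iter_diff (ℓ : ℕ) : Differentiable ℝ (iteratedDeriv ℓ r) := by
  rw [iteratedDeriv_eq_iterate]
  exact ((hr.of_le (by simp)).iterate_deriv ℓ).differentiable (by simp)

lemma Q_diff (ℓ : ℕ) : Differentiable ℝ (Q r ℓ) :=
  (iter_diff hr ℓ).div (hr.differentiable (by simp)) hr0

lemma Q_deriv (ℓ : ℕ) (x : ℝ) :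
    deriv (Q r ℓ) x = Q r (ℓ+1) x - Q r 1 x * Q r ℓ x := by
  have h1 : DifferentiableAt ℝ (iteratedDeriv ℓ r) x := (iter_diff hr ℓ) x
  have h2 : DifferentiableAt ℝ r x := (hr.differentiable (by simp)) x
  have := deriv_fun_div h1 h2 (hr0 x)
  rw [show Q r ℓ = fun x => iteratedDeriv ℓ r x / r x from rfl, this]
  have hd : deriv (iteratedDeriv ℓ r) x = iteratedDeriv (ℓ+1) r x := by rw [iteratedDeriv_succ]
  rw [hd]
  have hc : r x ≠ 0 := hr0 x
  simp only [Q, iteratedDeriv_one]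
  field_simp

omit hr hr0 in
lemma W_cons (ℓ : ℕ) (L : List ℕ) (x : ℝ) : W r (ℓ :: L) x = Q r ℓ x * W r L x := by
  simp [W]

lemma W_diff (L : List ℕ) : Differentiable ℝ (W r L) := by
  induction L with
  | nil =>
      have h0 : W r [] = fun _ => (1 : ℂ) := by funext x; simp [W]
      rw [h0]; exact differentiable_const _
  | cons ℓ L ih =>
      have : W r (ℓ :: L) = fun x => Q r ℓ x * W r L x := funext fun x => W_cons ℓ L x
      rw [this]
      exact (Q_diff hr hr0 ℓ).mul ih

lemma W_deriv (L : List ℕ) (x : ℝ) :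
    deriv (W r L) x = ((bumps L).map fun M => W r M x).sum - L.length * W r (1 :: L) x := by
  induction L with
  | nil =>
      have h0 : W r [] = fun _ => (1 : ℂ) := by funext x; simp [W]
      rw [h0]; simp [bumps]
  | cons ℓ L ih =>
      have hfun : W r (ℓ :: L) = fun y => Q r ℓ y * W r L y := funext fun y => W_cons ℓ L y
      rw [hfun, deriv_fun_mul ((Q_diff hr hr0 ℓ) x) ((W_diff hr hr0 L) x), Q_deriv hr hr0 ℓ x, ih]
      simp only [bumps, List.map_cons, List.map_map, List.sum_cons, List.length_cons]
      have hcomp : ((bumps L).map ((fun M => W r M x) ∘ (ℓ :: ·))) =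
          (bumps L).map fun M => Q r ℓ x * W r M x := by
        apply List.map_congr_left
        intro M _
        simp only [Function.comp_apply]
        exact W_cons ℓ M x
      rw [hcomp]
      have hmulsum : ((bumps L).map fun M => Q r ℓ x * W r M x).sum
          = Q r ℓ x * ((bumps L).map fun M => W r M x).sum := by
        induction bumps L with
        | nil => simp
        | cons a t iht => simp [iht]; ring
      rw [hmulsum]
      have e1 : W r ((ℓ+1) :: L) x = Q r (ℓ+1) x * W r L x := W_cons _ _ _
      have e2 : W r (1 :: ℓ :: L) x = Q r 1 x * (Q r ℓ x * W r L x) := by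
        rw [W_cons, W_cons]
      have e3 : W r (1 :: L) x = Q r 1 x * W r L x := W_cons _ _ _
      rw [e1, e2, e3]
      push_cast
      ring

lemma ev_diff (T : List (ℂ × List ℕ)) : Differentiable ℝ (ev r T) := by
  induction T with
  | nil =>
      have h0 : ev r [] = fun _ => (0 : ℂ) := by funext x; simp [ev]
      rw [h0]; exact differentiable_const _
  | cons p T ih =>
      have : ev r (p :: T) = fun x => p.1 * W r p.2 x + ev r T x := by
        funext x; simp [ev]
      rw [this]
      exact ((W_diff hr hr0 p.2).const_mul p.1).add ih

lemma ev_deriv (T : List (ℂ × List ℕ)) (x : ℝ) :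
    deriv (ev r T) x = ev r (Dform T) x := by
  induction T with
  | nil =>
      have h0 : ev r [] = fun _ => (0 : ℂ) := by funext x; simp [ev]
      rw [h0]; simp [ev, Dform]
  | cons p T ih =>
      have hfun : ev r (p :: T) = fun y => p.1 * W r p.2 y + ev r T y := by
        funext y; simp [ev]
      rw [hfun, deriv_fun_add (((W_diff hr hr0 p.2).const_mul p.1) x) ((ev_diff hr hr0 T) x),
        deriv_const_mul _ ((W_diff hr hr0 p.2) x), W_deriv hr hr0 p.2 x, ih]
      have hD : Dform (p :: T) = (((bumps p.2).map fun M => (p.1, M))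
          ++ [(-(p.2.length : ℂ) * p.1, 1 :: p.2)]) ++ Dform T := by
        simp [Dform]
      rw [hD]
      have hevapp : ∀ A B, ev r (A ++ B) x = ev r A x + ev r B x := by
        intro A B; simp [ev]
      rw [hevapp, hevapp]
      have : ev r ((bumps p.2).map fun M => (p.1, M)) x
          = p.1 * ((bumps p.2).map fun M => W r M x).sum := by
        simp only [ev, List.map_map]
        induction bumps p.2 with
        | nil => simp
        | cons a t iht => simp_all [Function.comp]; ring
      rw [this]
      simp [ev]
      ring

omit hr hr0 in
lemma ev_append (A B : List (ℂ × List ℕ)) (x : ℝ) :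
    ev r (A ++ B) x = ev r A x + ev r B x := by
  simp [ev]

omit hr hr0 in
lemma ev_scale (c : ℂ) (T : List (ℂ × List ℕ)) (x : ℝ) :
    ev r (T.map fun p => (c * p.1, 1 :: p.2)) x = c * Q r 1 x * ev r T x := by
  induction T with
  | nil => simp [ev]
  | cons p T ih =>
      simp only [List.map_cons, ev, List.sum_cons] at *
      rw [ih]
      rw [W_cons]
      ring

end PDICE

namespace PDICE

lemma Dform_nil : Dform [] = [] := rfl

lemma ev_nil (r : ℝ → ℂ) (x : ℝ) : ev r [] x = 0 := by simp [ev]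

section main
variable {r : ℝ → ℂ} (hr : ContDiff ℝ (⊤ : ℕ∞) r) (hr0 : ∀ x, r x ≠ 0)
include hr hr0

lemma expansion (u : ℝ → ℂ) (hu : ContDiff ℝ (⊤ : ℕ∞) u) :
    ∀ (N : ℕ) (x : ℝ), (Lop r)^[N] u x
      = r x ^ (-(N : ℤ)) * ∑ j ∈ Finset.range (N + 1), ev r (Tfun N j) x * iteratedDeriv j u x := by
  intro N
  induction N with
  | zero =>
      intro x
      simp [Tfun, ev]
      have h1 : W r [] x = 1 := by simp [W]
      simp [h1]
  | succ N ih =>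
      intro x
      have hrd : Differentiable ℝ r := hr.differentiable (by simp)
      set m : ℤ := -(N : ℤ) - 1 with hm
      -- the function g
      set g : ℝ → ℂ := fun y => ∑ j ∈ Finset.range (N + 1),
        ev r (Tfun N j) y * iteratedDeriv j u y with hg
      have hgd : Differentiable ℝ g := by
        apply Differentiable.fun_sum
        intro j _
        exact (ev_diff hr hr0 _).mul (iter_diff hu j)
      have hfun : (fun y => (Lop r)^[N] u y / r y) = fun y => r y ^ m * g y := by
        funext y
        rw [ih y, hm]
        rw [zpow_sub_one₀ (hr0 y) (-(N : ℤ))]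
        field_simp
        rfl
      rw [Function.iterate_succ_apply', Lop, hfun]
      -- derivative of the power part
      have hpow : HasDerivAt (fun y => r y ^ m) ((m : ℂ) * r x ^ (m - 1) * deriv r x) x :=
        (hasDerivAt_zpow m (r x) (Or.inl (hr0 x))).comp x (hrd x).hasDerivAt
      have htot : deriv (fun y => r y ^ m * g y) x
          = ((m : ℂ) * r x ^ (m - 1) * deriv r x) * g x + r x ^ m * deriv g x :=
        (hpow.mul (hgd x).hasDerivAt).deriv
      rw [htot]
      -- compute deriv g
      have hderivg : deriv g x = ∑ j ∈ Finset.range (N + 1),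
          (ev r (Dform (Tfun N j)) x * iteratedDeriv j u x
            + ev r (Tfun N j) x * iteratedDeriv (j + 1) u x) := by
        rw [hg, deriv_fun_sum (A := fun j y => ev r (Tfun N j) y * iteratedDeriv j u y) (fun j _ => ((ev_diff hr hr0 _).mul (iter_diff hu j)) x)]
        apply Finset.sum_congr rfl
        intro j _
        rw [deriv_fun_mul ((ev_diff hr hr0 _) x) ((iter_diff hu j) x), ev_deriv hr hr0,
          ← iteratedDeriv_succ]
      rw [hderivg]
      -- rewrite the first term using Q 1
      have hfirst : ((m : ℂ) * r x ^ (m - 1) * deriv r x) * g x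
          = r x ^ m * ((m : ℂ) * Q r 1 x * g x) := by
        rw [zpow_sub_one₀ (hr0 x) m]
        simp only [Q, iteratedDeriv_one]
        field_simp
      rw [hfirst]
      -- now express RHS coefficients
      have hTsucc : ∀ j, ev r (Tfun (N + 1) j) x
          = ev r (Dform (Tfun N j)) x + (-(N + 1 : ℂ)) * Q r 1 x * ev r (Tfun N j) x
            + (if j = 0 then 0 else ev r (Tfun N (j - 1)) x) := by
        intro j
        rw [Tfun, ev_append, ev_append, ev_scale]
        by_cases hj : j = 0
        · simp [hj, ev]
        · simp [hj]
      have hsum : ∑ j ∈ Finset.range (N + 2), ev r (Tfun (N + 1) j) x * iteratedDeriv j u x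
          = ∑ j ∈ Finset.range (N + 1),
              (ev r (Dform (Tfun N j)) x * iteratedDeriv j u x
                + ev r (Tfun N j) x * iteratedDeriv (j + 1) u x)
            + (-(N + 1 : ℂ)) * Q r 1 x * g x := by
        have hnil : Tfun N (N + 1) = [] := Tfun_eq_nil N (N + 1) (by omega)
        have hsplit : ∀ j, ev r (Tfun (N + 1) j) x * iteratedDeriv j u x
            = (ev r (Dform (Tfun N j)) x * iteratedDeriv j u x
                + (-(N + 1 : ℂ)) * Q r 1 x * (ev r (Tfun N j) x * iteratedDeriv j u x))
              + (if j = 0 then 0 else ev r (Tfun N (j - 1)) x * iteratedDeriv j u x) := by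
          intro j
          rw [hTsucc j]
          by_cases hj : j = 0 <;> simp [hj] <;> ring
        calc ∑ j ∈ Finset.range (N + 2), ev r (Tfun (N + 1) j) x * iteratedDeriv j u x
            = ∑ j ∈ Finset.range (N + 2),
                ((ev r (Dform (Tfun N j)) x * iteratedDeriv j u x
                  + (-(N + 1 : ℂ)) * Q r 1 x * (ev r (Tfun N j) x * iteratedDeriv j u x))
                + (if j = 0 then 0 else ev r (Tfun N (j - 1)) x * iteratedDeriv j u x)) :=
              Finset.sum_congr rfl fun j _ => hsplit j
          _ = _ := by
              rw [Finset.sum_add_distrib, Finset.sum_range_succ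
                (fun j => ev r (Dform (Tfun N j)) x * iteratedDeriv j u x
                  + (-(N + 1 : ℂ)) * Q r 1 x * (ev r (Tfun N j) x * iteratedDeriv j u x)),
                Finset.sum_range_succ' (fun j => if j = 0 then 0
                  else ev r (Tfun N (j - 1)) x * iteratedDeriv j u x) (N + 1)]
              rw [hnil, Dform_nil, ev_nil]
              simp only [Nat.add_sub_cancel, Nat.succ_ne_zero, if_false, zero_mul,
                mul_zero, add_zero, reduceIte]
              rw [Finset.sum_add_distrib, Finset.sum_add_distrib]
              rw [show (∑ j ∈ Finset.range (N + 1),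
                  (-(N + 1 : ℂ)) * Q r 1 x * (ev r (Tfun N j) x * iteratedDeriv j u x))
                = (-(N + 1 : ℂ)) * Q r 1 x * g x by rw [hg, Finset.mul_sum]]
              ring
      rw [hsum]
      have hcast : ((m : ℂ)) = -(N + 1 : ℂ) := by
        rw [hm]; push_cast; ring
      have hxm : (r x) ^ (-((N : ℤ) + 1)) = r x ^ m := by
        rw [hm]; congr 1; ring
      push_cast
      rw [hxm, hcast]
      ring

end main
end PDICE

namespace PDICE

lemma normW (r : ℝ → ℂ) : ∀ (L : List ℕ) (x : ℝ),
    ‖W r L x‖ = (L.map fun ℓ => ‖iteratedDeriv ℓ r x‖ / ‖r x‖).prod := by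
  intro L
  induction L with
  | nil => intro x; simp [W]
  | cons ℓ L ih =>
      intro x
      rw [W_cons, norm_mul, ih]
      simp only [List.map_cons, List.prod_cons]
      congr 1
      simp [Q, norm_div]

lemma length_le_sum : ∀ (L : List ℕ), (∀ ℓ ∈ L, 1 ≤ ℓ) → L.length ≤ L.sum := by
  intro L
  induction L with
  | nil => simp
  | cons a L ih =>
      intro h
      simp only [List.length_cons, List.sum_cons]
      have h1 : 1 ≤ a := h a (List.mem_cons_self)
      have h2 := ih fun ℓ hℓ => h ℓ (List.mem_cons_of_mem _ hℓ)
      omega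

/-- a single composition product is at most the full composition sum -/
lemma W_le_S {r : ℝ → ℂ} {L : List ℕ} {m : ℕ} (hpos : ∀ ℓ ∈ L, 1 ≤ ℓ)
    (hsum : L.sum = m) (hm : 1 ≤ m) (x : ℝ) :
    ‖W r L x‖ ≤ ∑ k ∈ Finset.Icc 1 m,
      ∑ ℓ ∈ (Fintype.piFinset fun _ : Fin k => Finset.Icc 1 m) |>.filter
          (fun ℓ => ∑ i, ℓ i = m),
        ∏ i, ‖iteratedDeriv (ℓ i) r x‖ / ‖r x‖ := by
  classical
  let k := L.length
  let ℓ0 : Fin k → ℕ := fun i => L[i.1]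
  have hval : ‖W r L x‖ = ∏ i, ‖iteratedDeriv (ℓ0 i) r x‖ / ‖r x‖ := by
    rw [normW]
    exact (Fin.prod_univ_fun_getElem L _).symm
  have hsum0 : ∑ i, ℓ0 i = m := by
    show ∑ i : Fin L.length, L[i.1] = m
    rw [Fin.sum_univ_getElem]; exact hsum
  have hLne : L ≠ [] := by
    intro h; rw [h] at hsum; simp at hsum; omega
  have hkmem : k ∈ Finset.Icc 1 m := by
    rw [Finset.mem_Icc]
    constructor
    · show 1 ≤ L.length
      cases L with
      | nil => exact absurd rfl hLne
      | cons a L => simp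
    · show L.length ≤ m
      rw [← hsum]; exact length_le_sum L hpos
  have hℓmem : ℓ0 ∈ ((Fintype.piFinset fun _ : Fin k => Finset.Icc 1 m) |>.filter
      (fun ℓ => ∑ i, ℓ i = m)) := by
    rw [Finset.mem_filter]
    refine ⟨?_, hsum0⟩
    rw [Fintype.mem_piFinset]
    intro i
    rw [Finset.mem_Icc]
    have hmem : L[i.1] ∈ L := List.getElem_mem _
    refine ⟨hpos _ hmem, ?_⟩
    calc L[i.1] ≤ L.sum := List.single_le_sum (fun n _ => Nat.zero_le n) _ hmem
      _ = m := hsum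
  rw [hval]
  have hterm_nonneg : ∀ (k' : ℕ) (ℓ : Fin k' → ℕ), 0 ≤ ∏ i, ‖iteratedDeriv (ℓ i) r x‖ / ‖r x‖ :=
    fun k' ℓ => Finset.prod_nonneg fun i _ => div_nonneg (norm_nonneg _) (norm_nonneg _)
  calc (∏ i, ‖iteratedDeriv (ℓ0 i) r x‖ / ‖r x‖)
      ≤ ∑ ℓ ∈ ((Fintype.piFinset fun _ : Fin k => Finset.Icc 1 m) |>.filter
          (fun ℓ => ∑ i, ℓ i = m)), ∏ i, ‖iteratedDeriv (ℓ i) r x‖ / ‖r x‖ :=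
        Finset.single_le_sum (fun ℓ _ => hterm_nonneg k ℓ) hℓmem
    _ ≤ _ := Finset.single_le_sum
        (f := fun k' => ∑ ℓ ∈ ((Fintype.piFinset fun _ : Fin k' => Finset.Icc 1 m) |>.filter
          (fun ℓ => ∑ i, ℓ i = m)), ∏ i, ‖iteratedDeriv (ℓ i) r x‖ / ‖r x‖)
        (fun k' _ => Finset.sum_nonneg fun ℓ _ => hterm_nonneg k' ℓ) hkmem

lemma ev_bound {r : ℝ → ℂ} (T : List (ℂ × List ℕ)) (x : ℝ) {S : ℝ} (hS : 0 ≤ S)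
    (hW : ∀ p ∈ T, ‖W r p.2 x‖ ≤ S) :
    ‖ev r T x‖ ≤ ((T.map fun p => ‖p.1‖).sum) * S := by
  induction T with
  | nil => simp [ev]
  | cons p T ih =>
      have hstep : ‖ev r (p :: T) x‖ ≤ ‖p.1‖ * ‖W r p.2 x‖ + ‖ev r T x‖ := by
        simp only [ev, List.map_cons, List.sum_cons]
        calc ‖p.1 * W r p.2 x + (T.map fun p => p.1 * W r p.2 x).sum‖
            ≤ ‖p.1 * W r p.2 x‖ + ‖(T.map fun p => p.1 * W r p.2 x).sum‖ := norm_add_le _ _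
          _ = ‖p.1‖ * ‖W r p.2 x‖ + ‖ev r T x‖ := by rw [norm_mul]; rfl
      calc ‖ev r (p :: T) x‖ ≤ ‖p.1‖ * ‖W r p.2 x‖ + ‖ev r T x‖ := hstep
        _ ≤ ‖p.1‖ * S + ((T.map fun p => ‖p.1‖).sum) * S :=
            add_le_add (mul_le_mul_of_nonneg_left (hW p (List.mem_cons_self))
              (norm_nonneg _)) (ih fun q hq => hW q (List.mem_cons_of_mem _ hq))
        _ = ((List.map (fun p => ‖p.1‖) (p :: T)).sum) * S := by
            simp only [List.map_cons, List.sum_cons]; ring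

end PDICE

/-- Leibniz-type expansion of `(∂ₓ ∘ r⁻¹)^N` with symbol-type estimates on the
coefficients: `(∂ₓ ∘ r⁻¹)^N = r^{-N} ∑_{j=0}^N b_j ∂ₓ^j`, with `b_N = 1` and
`|b_j(x)| ≲ ∑_{k=1}^{N-j} ∑_{ℓ₁+⋯+ℓ_k = N-j, ℓᵢ ≥ 1} ∏ᵢ |r^{(ℓᵢ)}(x)|/|r(x)|`. -/
theorem pow_deriv_comp_inv_expansion (N : ℕ) (hN : 1 ≤ N) :
    ∃ C : ℝ, 0 < C ∧
      ∀ r : ℝ → ℂ, ContDiff ℝ (⊤ : ℕ∞) r → (∀ x, r x ≠ 0) →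
        ∃ bc : ℕ → ℝ → ℂ,
          (∀ x, bc N x = 1) ∧
          (∀ u : ℝ → ℂ, ContDiff ℝ (⊤ : ℕ∞) u → ∀ x,
            (Lop r)^[N] u x
              = (r x) ^ (-(N : ℤ)) * ∑ j ∈ Finset.range (N + 1), bc j x * iteratedDeriv j u x) ∧
          (∀ j < N, ∀ x,
            ‖bc j x‖ ≤ C * ∑ k ∈ Finset.Icc 1 (N - j),
              ∑ ℓ ∈ (Fintype.piFinset fun _ : Fin k => Finset.Icc 1 (N - j)) |>.filter
                  (fun ℓ => ∑ i, ℓ i = N - j),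
                ∏ i, ‖iteratedDeriv (ℓ i) r x‖ / ‖r x‖) := by
  classical
  have hsum_nonneg : 0 ≤ ∑ j ∈ Finset.range N, ((PDICE.Tfun N j).map fun p => ‖p.1‖).sum :=
    Finset.sum_nonneg fun j _ => List.sum_nonneg fun a ha => by
      obtain ⟨p, _, rfl⟩ := List.mem_map.mp ha; exact norm_nonneg _
  refine ⟨1 + ∑ j ∈ Finset.range N, ((PDICE.Tfun N j).map fun p => ‖p.1‖).sum,
    by linarith, ?_⟩
  intro r hr hr0
  refine ⟨fun j x => PDICE.ev r (PDICE.Tfun N j) x, ?_, ?_, ?_⟩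
  · intro x
    show PDICE.ev r (PDICE.Tfun N N) x = 1
    rw [PDICE.Tfun_diag]
    simp [PDICE.ev, PDICE.W]
  · intro u hu x
    exact PDICE.expansion hr hr0 u hu N x
  · intro j hj x
    have hm : 1 ≤ N - j := by omega
    set S : ℝ := ∑ k ∈ Finset.Icc 1 (N - j),
      ∑ ℓ ∈ (Fintype.piFinset fun _ : Fin k => Finset.Icc 1 (N - j)) |>.filter
          (fun ℓ => ∑ i, ℓ i = N - j),
        ∏ i, ‖iteratedDeriv (ℓ i) r x‖ / ‖r x‖ with hSdef
    have hS : 0 ≤ S := by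
      rw [hSdef]
      exact Finset.sum_nonneg fun k _ => Finset.sum_nonneg fun ℓ _ =>
        Finset.prod_nonneg fun i _ => div_nonneg (norm_nonneg _) (norm_nonneg _)
    have hWb : ∀ p ∈ PDICE.Tfun N j, ‖PDICE.W r p.2 x‖ ≤ S := by
      intro p hp
      obtain ⟨hpos, hsumL⟩ := PDICE.mem_Tfun (le_of_lt hj) hp
      rw [hSdef]
      exact PDICE.W_le_S hpos hsumL hm x
    have h1 : ‖PDICE.ev r (PDICE.Tfun N j) x‖
        ≤ (((PDICE.Tfun N j).map fun p => ‖p.1‖).sum) * S :=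
      PDICE.ev_bound _ x hS hWb
    have h2 : ((PDICE.Tfun N j).map fun p => ‖p.1‖).sum
        ≤ 1 + ∑ j' ∈ Finset.range N, ((PDICE.Tfun N j').map fun p => ‖p.1‖).sum := by
      have h3 : ((PDICE.Tfun N j).map fun p => ‖p.1‖).sum
          ≤ ∑ j' ∈ Finset.range N, ((PDICE.Tfun N j').map fun p => ‖p.1‖).sum :=
        Finset.single_le_sum
          (f := fun j' => ((PDICE.Tfun N j').map fun p => ‖p.1‖).sum)
          (fun j' _ => List.sum_nonneg fun a ha => by
            obtain ⟨p, _, rfl⟩ := List.mem_map.mp ha; exact norm_nonneg _)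
          (Finset.mem_range.mpr hj)
      linarith
    calc ‖PDICE.ev r (PDICE.Tfun N j) x‖
        ≤ (((PDICE.Tfun N j).map fun p => ‖p.1‖).sum) * S := h1
      _ ≤ (1 + ∑ j' ∈ Finset.range N, ((PDICE.Tfun N j').map fun p => ‖p.1‖).sum) * S :=
          mul_le_mul_of_nonneg_right h2 hS
end

section
/- Let μ > -1, and let γ be a smooth function on (0,∞) supported in (0,10] satisfying |γ^{(α)}(x)| ≤ C_α x^{μ-α} for all α ∈ ℕ and x > 0. Let f be a smooth function on ℝ with Im f(x) ≥ 0 and f'(x) ≠ 0 for x in the support of γ, and f(0) ∈ ℝ. Then |∫₀^∞ γ(x) e^{iλ f(x)} dx| ≤ C λ^{-μ-1} for λ ≥ 1, with C depending only on γ, f, μ. -/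
open MeasureTheory Set
open scoped ContDiff

/-- Sequence of amplitudes obtained by repeated integration by parts. -/
noncomputable def nspsaSeq (g γ : ℝ → ℂ) : ℕ → ℝ → ℂ
  | 0 => γ
  | (k+1) => fun x => -deriv (fun y => nspsaSeq g γ k y * g y) x

lemma nspsa_itderiv_open {h : ℝ → ℂ} {s : Set ℝ} (hs : IsOpen s) {x : ℝ} (hx : x ∈ s) (n : ℕ) :
    iteratedDerivWithin n h s x = iteratedDeriv n h x := by
  simp only [iteratedDerivWithin, iteratedDeriv, iteratedFDerivWithin_of_isOpen n hs hx]

/-- Non-stationary phase theorem with a singular amplitude: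
`|∫₀^∞ γ(x) e^{iλ f(x)} dx| ≤ C λ^{-μ-1}` for `λ ≥ 1`. -/
theorem nonstationary_phase_singular_amplitude
    (μ : ℝ) (hμ : -1 < μ) (γ : ℝ → ℂ) (f : ℝ → ℂ)
    (hγ : ContDiffOn ℝ (⊤ : ℕ∞) γ (Ioi 0))
    (hsupp : ∀ x, γ x ≠ 0 → 0 < x ∧ x ≤ 10)
    (Cγ : ℕ → ℝ)
    (hbound : ∀ α : ℕ, ∀ x : ℝ, 0 < x →
      ‖iteratedDerivWithin α γ (Ioi 0) x‖ ≤ Cγ α * x ^ (μ - α))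
    (hf : ContDiff ℝ (⊤ : ℕ∞) f)
    (hIm : ∀ x ∈ tsupport γ, 0 ≤ (f x).im)
    (hf' : ∀ x ∈ tsupport γ, deriv f x ≠ 0)
    (hf0 : (f 0).im = 0) :
    ∃ C : ℝ, 0 < C ∧ ∀ lam : ℝ, 1 ≤ lam →
      ‖∫ x in Ioi (0 : ℝ), γ x * Complex.exp (Complex.I * lam * f x)‖
        ≤ C * lam ^ (-μ - 1) := by
  classical
  have hμ1 : (0:ℝ) < μ + 1 := by linarith
  have hCγ0 : ∀ α, 0 ≤ Cγ α := by
    intro α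
    have h := hbound α 1 one_pos
    have : (0:ℝ) ≤ Cγ α * 1 ^ (μ - α) := le_trans (norm_nonneg _) h
    simpa using this
  set K := tsupport γ with hKdef
  have hKsub : K ⊆ Icc 0 10 := by
    have : Function.support γ ⊆ Icc 0 10 := by
      intro x hx
      rcases hsupp x hx with ⟨h1, h2⟩
      exact ⟨le_of_lt h1, h2⟩
    exact closure_minimal this isClosed_Icc
  set U : Set ℝ := {x | deriv f x ≠ 0} with hUdef
  have hUopen : IsOpen U := isOpen_ne_fun (hf.continuous_deriv (by simp)) continuous_const
  have hKU : K ⊆ U := fun x hx => hf' x hx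
  set g : ℝ → ℂ := fun x => (deriv f x)⁻¹ with hgdef
  have hfsm : ContDiff ℝ ∞ f := hf.of_le (by simp)
  have hgU : ContDiffOn ℝ ∞ g U := by
    apply ContDiffOn.inv
    · exact (hfsm.iterate_deriv 1).contDiffOn.mono (subset_univ U) |>.congr (fun x _ => by
        simp [Function.iterate_one])
    · exact fun x hx => hx
  have hγ' : ContDiffOn ℝ ∞ γ (Ioi 0) := hγ.of_le (by simp)
  set S : Set ℝ := U ∩ Ioi 0 with hSdef
  have hSopen : IsOpen S := hUopen.inter isOpen_Ioi
  set a : ℕ → ℝ → ℂ := nspsaSeq g γ with hadef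
  have ha0 : a 0 = γ := rfl
  have hgS : ContDiffOn ℝ ∞ g S := hgU.mono inter_subset_left
  have haS : ∀ k, ContDiffOn ℝ ∞ (a k) S := by
    intro k
    induction k with
    | zero => exact hγ'.mono inter_subset_right
    | succ k ih =>
      have hu : ContDiffOn ℝ ∞ (fun y => a k y * g y) S := ih.mul hgS
      have : ContDiffOn ℝ ∞ (deriv (fun y => a k y * g y)) S :=
        hu.deriv_of_isOpen hSopen (by simp)
      exact this.neg
  have hasupp : ∀ k, tsupport (a k) ⊆ K := by
    intro k
    induction k with
    | zero => exact subset_rfl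
    | succ k ih =>
      have h1 : tsupport (fun y => a k y * g y) ⊆ tsupport (a k) :=
        closure_minimal (fun x hx => subset_closure (Function.support_mul_subset_left _ _ hx))
          (isClosed_tsupport _)
      have h2 : Function.support (a (k+1)) ⊆ K := by
        intro x hx
        have hx' : deriv (fun y => a k y * g y) x ≠ 0 := by
          intro h; exact hx (by show -deriv (fun y => a k y * g y) x = 0; rw [h, neg_zero])
        exact ih (h1 (support_deriv_subset hx'))
      exact closure_minimal h2 (isClosed_tsupport γ)
  have hevzero : ∀ k, ∀ x : ℝ, x ∉ K → (∀ᶠ y in nhds x, a k y = 0) := by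
    intro k x hx
    filter_upwards [(isClosed_tsupport γ).isOpen_compl.mem_nhds hx] with y hy
    exact image_eq_zero_of_notMem_tsupport (fun h => hy (hasupp k h))
  have hacont : ∀ k, ∀ x ∈ Ioi (0:ℝ), ContinuousAt (a k) x := by
    intro k x hx
    by_cases hxU : x ∈ U
    · exact (haS k).continuousOn.continuousAt (hSopen.mem_nhds ⟨hxU, hx⟩)
    · have h0 : a k =ᶠ[nhds x] (fun _ => (0:ℂ)) := hevzero k x (fun h => hxU (hKU h))
      exact continuousAt_const.congr h0.symm
  have haderiv : ∀ k, ∀ x ∈ Ioi (0:ℝ),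
      HasDerivAt (fun y => a k y * g y) (-(a (k+1) x)) x := by
    intro k x hx
    by_cases hxU : x ∈ U
    · have hu : ContDiffOn ℝ ∞ (fun y => a k y * g y) S := (haS k).mul hgS
      have hd : DifferentiableAt ℝ (fun y => a k y * g y) x :=
        (hu.differentiableOn (by simp)).differentiableAt (hSopen.mem_nhds ⟨hxU, hx⟩)
      have := hd.hasDerivAt
      have hval : -(a (k+1) x) = deriv (fun y => a k y * g y) x := by
        show -(-deriv (fun y => a k y * g y) x) = _
        rw [neg_neg]
      rwa [hval]
    · have hxK : x ∉ K := fun h => hxU (hKU h)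
      have h0 : (fun y => a k y * g y) =ᶠ[nhds x] (fun _ => (0:ℂ)) := by
        filter_upwards [hevzero k x hxK] with y hy using by rw [hy, zero_mul]
      have hd : HasDerivAt (fun y => a k y * g y) 0 x :=
        (hasDerivAt_const x (0:ℂ)).congr_of_eventuallyEq h0
      have hval : -(a (k+1) x) = 0 := by
        show -(-deriv (fun y => a k y * g y) x) = 0
        rw [h0.deriv_eq, deriv_const, neg_zero, neg_zero]
      rwa [hval]
  -- bounds for g on K
  have hKcpt : IsCompact K := (isCompact_Icc).of_isClosed_subset (isClosed_tsupport γ) hKsub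
  have hMg' : ∀ j : ℕ, ∃ M : ℝ, 0 ≤ M ∧ ∀ x ∈ K, ‖iteratedDeriv j g x‖ ≤ M := by
    intro j
    have hcontU : ContinuousOn (iteratedDeriv j g) U := by
      have h1 : ContinuousOn (iteratedDerivWithin j g U) U :=
        hgU.continuousOn_iteratedDerivWithin (by exact_mod_cast le_top) hUopen.uniqueDiffOn
      exact h1.congr fun x hx => (nspsa_itderiv_open hUopen hx j).symm
    obtain ⟨M, hM⟩ := hKcpt.exists_bound_of_continuousOn (hcontU.mono hKU)
    exact ⟨max M 0, le_max_right _ _, fun x hx => (hM x hx).trans (le_max_left _ _)⟩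
  choose Mg hMg0 hMg using hMg'
  -- bounds for the amplitudes
  have hB : ∀ k α : ℕ, ∃ C : ℝ, 0 ≤ C ∧ ∀ x ∈ Ioc (0:ℝ) 10,
      ‖iteratedDeriv α (a k) x‖ ≤ C * x ^ (μ - k - α) := by
    intro k
    induction k with
    | zero =>
      intro α
      refine ⟨Cγ α, hCγ0 α, fun x hx => ?_⟩
      have hxi : x ∈ Ioi (0:ℝ) := hx.1
      calc ‖iteratedDeriv α (a 0) x‖
          = ‖iteratedDerivWithin α γ (Ioi 0) x‖ := by
            rw [ha0, nspsa_itderiv_open isOpen_Ioi hxi α]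
        _ ≤ Cγ α * x ^ (μ - α) := hbound α x hxi
        _ = Cγ α * x ^ (μ - (0:ℕ) - α) := by norm_num
    | succ k ih =>
      choose CB' hCB'0 hCB' using ih
      intro α
      refine ⟨∑ i ∈ Finset.range (α+1+1), ((α+1).choose i : ℝ) * CB' i * Mg (α+1-i)
        * 10 ^ (((α+1-i : ℕ)) : ℝ), ?_, fun x hx => ?_⟩
      · refine Finset.sum_nonneg fun i _ => ?_
        exact mul_nonneg (mul_nonneg (mul_nonneg (Nat.cast_nonneg _) (hCB'0 i)) (hMg0 _))
          (Real.rpow_nonneg (by norm_num) _)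
      have hx0 : (0:ℝ) < x := hx.1
      have hC'0 : (0:ℝ) ≤ ∑ i ∈ Finset.range (α+1+1), ((α+1).choose i : ℝ) * CB' i * Mg (α+1-i)
          * 10 ^ (((α+1-i : ℕ)) : ℝ) := by
        refine Finset.sum_nonneg fun i _ => ?_
        exact mul_nonneg (mul_nonneg (mul_nonneg (Nat.cast_nonneg _) (hCB'0 i)) (hMg0 _))
          (Real.rpow_nonneg (by norm_num) _)
      by_cases hxK : x ∈ K
      · have hxS : x ∈ S := ⟨hKU hxK, hx.1⟩
        have hstep : ‖iteratedDeriv α (a (k+1)) x‖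
            = ‖iteratedDeriv (α+1) (fun y => a k y * g y) x‖ := by
          calc ‖iteratedDeriv α (a (k+1)) x‖
              = ‖-iteratedDeriv α (deriv (fun y => a k y * g y)) x‖ := by
                rw [show (a (k+1)) = -(deriv (fun y => a k y * g y)) from rfl,
                  iteratedDeriv_neg]
            _ = ‖iteratedDeriv (α+1) (fun y => a k y * g y) x‖ := by
                rw [norm_neg, ← iteratedDeriv_succ']
        have hleib : ‖iteratedDeriv (α+1) (fun y => a k y * g y) x‖ ≤
            ∑ i ∈ Finset.range (α+1+1), ((α+1).choose i : ℝ) *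
              ‖iteratedDeriv i (a k) x‖ * ‖iteratedDeriv (α+1-i) g x‖ := by
          have h := norm_iteratedFDerivWithin_mul_le (𝕜 := ℝ) (f := a k) (g := g) (s := S)
            (haS k) hgS hSopen.uniqueDiffOn hxS (n := α+1) (by exact_mod_cast le_top)
          calc ‖iteratedDeriv (α+1) (fun y => a k y * g y) x‖
              = ‖iteratedFDerivWithin ℝ (α+1) (fun y => a k y * g y) S x‖ := by
                rw [iteratedFDerivWithin_of_isOpen (α+1) hSopen hxS,
                  norm_iteratedFDeriv_eq_norm_iteratedDeriv]
            _ ≤ ∑ i ∈ Finset.range (α+1+1), ((α+1).choose i : ℝ) *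
                ‖iteratedFDerivWithin ℝ i (a k) S x‖ *
                ‖iteratedFDerivWithin ℝ (α+1-i) g S x‖ := h
            _ = ∑ i ∈ Finset.range (α+1+1), ((α+1).choose i : ℝ) *
                ‖iteratedDeriv i (a k) x‖ * ‖iteratedDeriv (α+1-i) g x‖ := by
                refine Finset.sum_congr rfl fun i _ => ?_
                rw [iteratedFDerivWithin_of_isOpen _ hSopen hxS,
                  iteratedFDerivWithin_of_isOpen _ hSopen hxS,
                  norm_iteratedFDeriv_eq_norm_iteratedDeriv,
                  norm_iteratedFDeriv_eq_norm_iteratedDeriv]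
        have hterm : ∀ i ∈ Finset.range (α+1+1),
            ((α+1).choose i : ℝ) * ‖iteratedDeriv i (a k) x‖ * ‖iteratedDeriv (α+1-i) g x‖
            ≤ (((α+1).choose i : ℝ) * CB' i * Mg (α+1-i) * 10 ^ (((α+1-i : ℕ)) : ℝ))
              * x ^ (μ - (k+1:ℕ) - α) := by
          intro i hi
          have hi' : i ≤ α+1 := Nat.lt_succ_iff.mp (Finset.mem_range.mp hi)
          have h1 : ‖iteratedDeriv i (a k) x‖ ≤ CB' i * x ^ (μ - k - i) := hCB' i x hx
          have h2 : ‖iteratedDeriv (α+1-i) g x‖ ≤ Mg (α+1-i) := hMg _ x hxK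
          have h3 : x ^ (μ - (k:ℕ) - (i:ℕ)) ≤ 10 ^ (((α+1-i:ℕ)):ℝ) * x ^ (μ - (k+1:ℕ) - α) := by
            have hsplit : (μ - (k:ℕ) - (i:ℕ) : ℝ) = (μ - ((k+1:ℕ):ℝ) - α) + ((α+1-i : ℕ) : ℝ) := by
              rw [Nat.cast_sub hi']
              push_cast
              ring
            rw [hsplit, Real.rpow_add hx0]
            have hxle : x ^ (((α+1-i:ℕ)):ℝ) ≤ 10 ^ (((α+1-i:ℕ)):ℝ) :=
              Real.rpow_le_rpow hx0.le hx.2 (Nat.cast_nonneg _)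
            calc x ^ (μ - ((k+1:ℕ):ℝ) - α) * x ^ (((α+1-i:ℕ)):ℝ)
                ≤ x ^ (μ - ((k+1:ℕ):ℝ) - α) * 10 ^ (((α+1-i:ℕ)):ℝ) :=
                  mul_le_mul_of_nonneg_left hxle (Real.rpow_nonneg hx0.le _)
              _ = 10 ^ (((α+1-i:ℕ)):ℝ) * x ^ (μ - ((k+1:ℕ):ℝ) - α) := mul_comm _ _
          have hnn1 : (0:ℝ) ≤ ((α+1).choose i : ℝ) := Nat.cast_nonneg _
          calc ((α+1).choose i : ℝ) * ‖iteratedDeriv i (a k) x‖ * ‖iteratedDeriv (α+1-i) g x‖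
              ≤ ((α+1).choose i : ℝ) * (CB' i * x ^ (μ - k - i)) * Mg (α+1-i) := by
                refine mul_le_mul (mul_le_mul_of_nonneg_left h1 hnn1) h2 (norm_nonneg _) ?_
                exact mul_nonneg hnn1 (mul_nonneg (hCB'0 i) (Real.rpow_nonneg hx0.le _))
            _ ≤ ((α+1).choose i : ℝ) *
                  (CB' i * (10 ^ (((α+1-i:ℕ)):ℝ) * x ^ (μ - (k+1:ℕ) - α))) * Mg (α+1-i) := by
                refine mul_le_mul_of_nonneg_right ?_ (hMg0 _)
                refine mul_le_mul_of_nonneg_left ?_ hnn1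
                exact mul_le_mul_of_nonneg_left h3 (hCB'0 i)
            _ = (((α+1).choose i : ℝ) * CB' i * Mg (α+1-i) * 10 ^ (((α+1-i : ℕ)) : ℝ))
                  * x ^ (μ - (k+1:ℕ) - α) := by ring
        calc ‖iteratedDeriv α (a (k+1)) x‖
            = ‖iteratedDeriv (α+1) (fun y => a k y * g y) x‖ := hstep
          _ ≤ ∑ i ∈ Finset.range (α+1+1), ((α+1).choose i : ℝ) *
              ‖iteratedDeriv i (a k) x‖ * ‖iteratedDeriv (α+1-i) g x‖ := hleib
          _ ≤ ∑ i ∈ Finset.range (α+1+1), (((α+1).choose i : ℝ) * CB' i * Mg (α+1-i)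
              * 10 ^ (((α+1-i : ℕ)) : ℝ)) * x ^ (μ - (k+1:ℕ) - α) := Finset.sum_le_sum hterm
          _ = (∑ i ∈ Finset.range (α+1+1), ((α+1).choose i : ℝ) * CB' i * Mg (α+1-i)
              * 10 ^ (((α+1-i : ℕ)) : ℝ)) * x ^ (μ - (k+1:ℕ) - α) := by
              rw [← Finset.sum_mul]
      · have h0 : iteratedDeriv α (a (k+1)) x = 0 := by
          have heq : a (k+1) =ᶠ[nhds x] (fun _ => (0:ℂ)) := hevzero (k+1) x hxK
          rw [heq.iteratedDeriv_eq α]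
          simp [iteratedDeriv, iteratedFDeriv_zero_fun]
        rw [h0, norm_zero]
        exact mul_nonneg hC'0 (Real.rpow_nonneg hx0.le _)
  choose CB hCB0 hCB using hB
  -- number of integrations by parts
  set N : ℕ := ⌈μ⌉₊ + 3 with hNdef
  have hNμ : μ + 3 ≤ (N:ℝ) := by
    have h := Nat.le_ceil μ
    have h2 : ((N:ℕ):ℝ) = (⌈μ⌉₊ : ℝ) + 3 := by rw [hNdef]; push_cast; ring
    linarith
  have hd : (0:ℝ) < (N:ℝ) - μ - 1 := by linarith
  set Ctot : ℝ := Cγ 0 / (μ+1) + (∑ j ∈ Finset.range N, CB j 0 * Mg 0)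
      + CB N 0 / ((N:ℝ)-μ-1) with hCt
  have hCtot0 : 0 ≤ Ctot := by
    have h1 : (0:ℝ) ≤ Cγ 0 / (μ+1) := div_nonneg (hCγ0 0) hμ1.le
    have h2 : (0:ℝ) ≤ ∑ j ∈ Finset.range N, CB j 0 * Mg 0 :=
      Finset.sum_nonneg fun j _ => mul_nonneg (hCB0 j 0) (hMg0 0)
    have h3 : (0:ℝ) ≤ CB N 0 / ((N:ℝ)-μ-1) := div_nonneg (hCB0 N 0) hd.le
    rw [hCt]; linarith
  refine ⟨Ctot + 1, by linarith, fun lam hlam => ?_⟩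
  have hl0 : (0:ℝ) < lam := lt_of_lt_of_le one_pos hlam
  set E : ℝ → ℂ := fun x => Complex.exp (Complex.I * lam * f x) with hEdef
  have hEcont : Continuous E :=
    Complex.continuous_exp.comp (continuous_const.mul hf.continuous)
  have hEnorm : ∀ x ∈ K, ‖E x‖ ≤ 1 := by
    intro x hx
    have hre : (Complex.I * (lam:ℂ) * f x).re = -(lam * (f x).im) := by
      simp [Complex.mul_re, Complex.mul_im]
    have hEx : E x = Complex.exp (Complex.I * lam * f x) := rfl
    rw [hEx, Complex.norm_exp, hre]
    exact Real.exp_le_one_iff.mpr (neg_nonpos.mpr (mul_nonneg hl0.le (hIm x hx)))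
  set ε : ℝ := lam⁻¹ with hεdef
  have hε0 : (0:ℝ) < ε := by rw [hεdef]; exact inv_pos.mpr hl0
  have hε1 : ε ≤ 1 := by rw [hεdef]; exact inv_le_one_of_one_le₀ hlam
  have hinvpow : ∀ t : ℝ, ε ^ t = lam ^ (-t) := by
    intro t
    rw [hεdef, Real.inv_rpow hl0.le, ← Real.rpow_neg hl0.le]
  have hγE : ∀ x ∈ Ioi (0:ℝ), ‖γ x * E x‖ ≤ Cγ 0 * x ^ μ := by
    intro x hx
    by_cases hxK : x ∈ K
    · have h1 : ‖γ x‖ ≤ Cγ 0 * x ^ μ := by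
        have := hbound 0 x hx
        rw [iteratedDerivWithin_zero] at this
        simpa using this
      calc ‖γ x * E x‖ = ‖γ x‖ * ‖E x‖ := norm_mul _ _
        _ ≤ (Cγ 0 * x ^ μ) * 1 := mul_le_mul h1 (hEnorm x hxK) (norm_nonneg _)
            (mul_nonneg (hCγ0 0) (Real.rpow_nonneg (le_of_lt hx) _))
        _ = Cγ 0 * x ^ μ := mul_one _
    · have hz : γ x = 0 := image_eq_zero_of_notMem_tsupport hxK
      rw [hz, zero_mul, norm_zero]
      exact mul_nonneg (hCγ0 0) (Real.rpow_nonneg (le_of_lt hx) _)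
  -- integrability
  have hin_rpow : IntegrableOn (fun x : ℝ => Cγ 0 * x ^ μ) (Ioc (0:ℝ) 11) volume := by
    have h1 : IntervalIntegrable (fun x : ℝ => x ^ μ) volume 0 11 := intervalIntegral.intervalIntegrable_rpow' hμ
    rw [intervalIntegrable_iff_integrableOn_Ioc_of_le (by norm_num : (0:ℝ) ≤ 11)] at h1
    exact h1.const_mul _
  have hγEcont : ContinuousOn (fun x => γ x * E x) (Ioi (0:ℝ)) :=
    hγ'.continuousOn.mul hEcont.continuousOn
  have hInt : IntegrableOn (fun x => γ x * E x) (Ioc (0:ℝ) 11) volume := by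
    refine Integrable.mono' hin_rpow
      ((hγEcont.mono Ioc_subset_Ioi_self).aestronglyMeasurable measurableSet_Ioc) ?_
    exact (ae_restrict_iff' measurableSet_Ioc).mpr
      (Filter.Eventually.of_forall fun x hx => hγE x hx.1)
  have hzero_tail : ∀ x ∈ Ioi (11:ℝ), γ x * E x = 0 := by
    intro x hx
    have hz : γ x = 0 := by
      by_contra h
      have h10 := (hsupp x h).2
      have hx' : (11:ℝ) < x := hx
      linarith
    rw [hz, zero_mul]
  have hIoi : ∫ x in Ioi (0:ℝ), γ x * E x = ∫ x in Ioc (0:ℝ) 11, γ x * E x := by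
    have hun : Ioc (0:ℝ) 11 ∪ Ioi 11 = Ioi 0 := Ioc_union_Ioi_eq_Ioi (by norm_num)
    have htail : IntegrableOn (fun x => γ x * E x) (Ioi (11:ℝ)) volume :=
      (integrableOn_zero).congr_fun (fun x hx => (hzero_tail x hx).symm) measurableSet_Ioi
    rw [← hun, setIntegral_union (Ioc_disjoint_Ioi le_rfl) measurableSet_Ioi hInt htail,
      setIntegral_eq_zero_of_forall_eq_zero hzero_tail, add_zero]
  have hsplit2 : ∫ x in Ioc (0:ℝ) 11, γ x * E x
      = (∫ x in Ioc (0:ℝ) ε, γ x * E x) + ∫ x in Ioc ε 11, γ x * E x := by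
    rw [← Ioc_union_Ioc_eq_Ioc hε0.le (by linarith : ε ≤ 11),
      setIntegral_union (Ioc_disjoint_Ioc_of_le le_rfl) measurableSet_Ioc
        (hInt.mono_set (Ioc_subset_Ioc_right (by linarith)))
        (hInt.mono_set (Ioc_subset_Ioc_left hε0.le))]
  -- small piece
  have hpiece1 : ‖∫ x in Ioc (0:ℝ) ε, γ x * E x‖ ≤ Cγ 0 / (μ+1) * lam ^ (-μ-1) := by
    have h1 : ‖∫ x in Ioc (0:ℝ) ε, γ x * E x‖ ≤ ∫ x in Ioc (0:ℝ) ε, Cγ 0 * x ^ μ := by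
      refine MeasureTheory.norm_integral_le_of_norm_le
        (hin_rpow.mono_set (Ioc_subset_Ioc_right (by linarith))) ?_
      exact (ae_restrict_iff' measurableSet_Ioc).mpr
        (Filter.Eventually.of_forall fun x hx => hγE x hx.1)
    have h2 : ∫ x in Ioc (0:ℝ) ε, Cγ 0 * x ^ μ = Cγ 0 * (ε ^ (μ+1) / (μ+1)) := by
      rw [← intervalIntegral.integral_of_le hε0.le, intervalIntegral.integral_const_mul,
        integral_rpow (Or.inl hμ), Real.zero_rpow (by linarith : μ + 1 ≠ 0), sub_zero]
    have h3 : ε ^ (μ+1) = lam ^ (-μ-1) := by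
      rw [hinvpow (μ+1)]; congr 1; ring
    rw [h2, h3] at h1
    calc ‖∫ x in Ioc (0:ℝ) ε, γ x * E x‖ ≤ Cγ 0 * (lam ^ (-μ-1) / (μ+1)) := h1
      _ = Cγ 0 / (μ+1) * lam ^ (-μ-1) := by ring
  -- integration by parts
  have hIlam : Complex.I * (lam:ℂ) ≠ 0 :=
    mul_ne_zero Complex.I_ne_zero (by exact_mod_cast hl0.ne')
  have hIcc_pos : Icc ε 11 ⊆ Ioi (0:ℝ) := fun x hx => lt_of_lt_of_le hε0 hx.1
  have hcontOn : ∀ k, ContinuousOn (a k) (Icc ε 11) := fun k x hx =>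
    (hacont k x (hIcc_pos hx)).continuousWithinAt
  have huIcc : uIcc ε 11 = Icc ε 11 := uIcc_of_le (by linarith)
  have hstep : ∀ k, ∫ x in ε..11, a k x * E x
      = -(a k ε * g ε * E ε) * (Complex.I*(lam:ℂ))⁻¹
        + (Complex.I*(lam:ℂ))⁻¹ * ∫ x in ε..11, a (k+1) x * E x := by
    intro k
    have hu : ∀ x ∈ uIcc ε 11, HasDerivAt (fun y => a k y * g y) (-(a (k+1) x)) x := by
      rw [huIcc]; exact fun x hx => haderiv k x (hIcc_pos hx)
    have hv : ∀ x ∈ uIcc ε 11, HasDerivAt E (E x * (Complex.I * (lam:ℂ) * deriv f x)) x := by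
      intro x _
      have hdf : HasDerivAt f (deriv f x) x :=
        (hf.differentiable (by simp)).differentiableAt.hasDerivAt
      exact (hdf.const_mul (Complex.I * (lam:ℂ))).cexp
    have hu' : IntervalIntegrable (fun x => -(a (k+1) x)) volume ε 11 := by
      apply ContinuousOn.intervalIntegrable
      rw [huIcc]; exact (hcontOn (k+1)).neg
    have hv' : IntervalIntegrable (fun x => E x * (Complex.I*(lam:ℂ)*deriv f x)) volume ε 11 :=
      (hEcont.mul (continuous_const.mul (hf.continuous_deriv (by simp)))).intervalIntegrable _ _
    have hibp' := intervalIntegral.integral_mul_deriv_eq_deriv_mul hu hv hu' hv'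
    have hibp : (∫ x in ε..11, (a k x * g x) * (E x * (Complex.I*(lam:ℂ)*deriv f x)))
        = (a k 11 * g 11) * E 11 - (a k ε * g ε) * E ε
          - ∫ x in ε..11, -(a (k+1) x) * E x := hibp'
    have heq : (∫ x in ε..11, (a k x * g x) * (E x * (Complex.I*(lam:ℂ)*deriv f x)))
        = (Complex.I*(lam:ℂ)) * ∫ x in ε..11, a k x * E x := by
      rw [← intervalIntegral.integral_const_mul]
      refine intervalIntegral.integral_congr fun x hx => ?_
      by_cases hxU : x ∈ U
      · have hone : g x * deriv f x = 1 := inv_mul_cancel₀ hxU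
        calc a k x * g x * (E x * (Complex.I*(lam:ℂ)*deriv f x))
            = (Complex.I*(lam:ℂ)) * (a k x * E x) * (g x * deriv f x) := by ring
          _ = (Complex.I*(lam:ℂ)) * (a k x * E x) := by rw [hone, mul_one]
      · have hz : a k x = 0 :=
          image_eq_zero_of_notMem_tsupport (fun h => hxU (hKU (hasupp k h)))
        simp [hz]
    have h11 : a k 11 * g 11 = 0 := by
      have hz : a k 11 = 0 := by
        refine image_eq_zero_of_notMem_tsupport fun h => ?_
        have h10 := (hKsub (hasupp k h)).2
        norm_num at h10
      rw [hz, zero_mul]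
    have hneg : (∫ x in ε..11, -(a (k+1) x) * E x)
        = -∫ x in ε..11, a (k+1) x * E x := by
      simp [neg_mul, intervalIntegral.integral_neg]
    calc ∫ x in ε..11, a k x * E x
        = (Complex.I*(lam:ℂ))⁻¹ * ((Complex.I*(lam:ℂ)) * ∫ x in ε..11, a k x * E x) := by
          rw [← mul_assoc, inv_mul_cancel₀ hIlam, one_mul]
      _ = (Complex.I*(lam:ℂ))⁻¹
            * (∫ x in ε..11, (a k x * g x) * (E x * (Complex.I*(lam:ℂ)*deriv f x))) := by
          rw [heq]
      _ = (Complex.I*(lam:ℂ))⁻¹ * ((a k 11 * g 11) * E 11 - (a k ε * g ε) * E ε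
            - ∫ x in ε..11, -(a (k+1) x) * E x) := by rw [hibp]
      _ = -(a k ε * g ε * E ε) * (Complex.I*(lam:ℂ))⁻¹
            + (Complex.I*(lam:ℂ))⁻¹ * ∫ x in ε..11, a (k+1) x * E x := by
          rw [h11, hneg]; ring
  have hIBP : ∫ x in ε..11, γ x * E x
      = (∑ j ∈ Finset.range N, -(a j ε * g ε * E ε) * ((Complex.I*(lam:ℂ))⁻¹)^(j+1))
        + ((Complex.I*(lam:ℂ))⁻¹)^N * ∫ x in ε..11, a N x * E x := by
    have key : ∀ n : ℕ, ∫ x in ε..11, γ x * E x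
        = (∑ j ∈ Finset.range n, -(a j ε * g ε * E ε) * ((Complex.I*(lam:ℂ))⁻¹)^(j+1))
          + ((Complex.I*(lam:ℂ))⁻¹)^n * ∫ x in ε..11, a n x * E x := by
      intro n
      induction n with
      | zero => simp [ha0]
      | succ n ih =>
        calc ∫ x in ε..11, γ x * E x
            = (∑ j ∈ Finset.range n, -(a j ε * g ε * E ε) * ((Complex.I*(lam:ℂ))⁻¹)^(j+1))
              + ((Complex.I*(lam:ℂ))⁻¹)^n * ∫ x in ε..11, a n x * E x := ih
          _ = (∑ j ∈ Finset.range n, -(a j ε * g ε * E ε) * ((Complex.I*(lam:ℂ))⁻¹)^(j+1))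
              + ((Complex.I*(lam:ℂ))⁻¹)^n * (-(a n ε * g ε * E ε) * (Complex.I*(lam:ℂ))⁻¹
                + (Complex.I*(lam:ℂ))⁻¹ * ∫ x in ε..11, a (n+1) x * E x) := by rw [hstep n]
          _ = (∑ j ∈ Finset.range (n+1), -(a j ε * g ε * E ε) * ((Complex.I*(lam:ℂ))⁻¹)^(j+1))
              + ((Complex.I*(lam:ℂ))⁻¹)^(n+1) * ∫ x in ε..11, a (n+1) x * E x := by
            rw [Finset.sum_range_succ]; ring
    exact key N
  have hnormIlam : ‖(Complex.I*(lam:ℂ))⁻¹‖ = lam⁻¹ := by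
    rw [norm_inv, norm_mul, Complex.norm_I, one_mul, Complex.norm_real,
      Real.norm_eq_abs, abs_of_pos hl0]
  -- boundary terms
  have hsum : ‖∑ j ∈ Finset.range N, -(a j ε * g ε * E ε) * ((Complex.I*(lam:ℂ))⁻¹)^(j+1)‖
      ≤ (∑ j ∈ Finset.range N, CB j 0 * Mg 0) * lam ^ (-μ-1) := by
    rw [Finset.sum_mul]
    refine (norm_sum_le _ _).trans (Finset.sum_le_sum fun j _ => ?_)
    have hnrm : ‖-(a j ε * g ε * E ε) * ((Complex.I*(lam:ℂ))⁻¹)^(j+1)‖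
        = ‖a j ε‖ * ‖g ε‖ * ‖E ε‖ * (lam⁻¹)^(j+1) := by
      rw [norm_mul, norm_neg, norm_mul, norm_mul, norm_pow, hnormIlam]
    rw [hnrm]
    have hP0 : (0:ℝ) ≤ (lam⁻¹)^(j+1) := pow_nonneg (inv_nonneg.mpr hl0.le) _
    by_cases hεK : ε ∈ K
    · have h1 : ‖a j ε‖ ≤ CB j 0 * ε ^ (μ - (j:ℝ) - ((0:ℕ):ℝ)) := by
        have := hCB j 0 ε ⟨hε0, by linarith⟩
        rwa [iteratedDeriv_zero] at this
      have h1' : ‖a j ε‖ ≤ CB j 0 * ε ^ (μ - (j:ℝ)) := by simpa using h1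
      have h2 : ‖g ε‖ ≤ Mg 0 := by
        have := hMg 0 ε hεK
        rwa [iteratedDeriv_zero] at this
      have h3 : ‖E ε‖ ≤ 1 := hEnorm ε hεK
      have hpow : ε ^ (μ - (j:ℝ)) * (lam⁻¹)^(j+1) = lam ^ (-μ-1) := by
        have hp1 : (lam⁻¹)^(j+1) = lam ^ (-(((j:ℝ))+1)) := by
          rw [← Real.rpow_natCast lam⁻¹ (j+1), Real.inv_rpow hl0.le, ← Real.rpow_neg hl0.le]
          congr 1
          push_cast; ring
        rw [hp1, hinvpow (μ - (j:ℝ)), ← Real.rpow_add hl0]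
        congr 1; ring
      have hnn : (0:ℝ) ≤ CB j 0 * ε ^ (μ - (j:ℝ)) :=
        mul_nonneg (hCB0 j 0) (Real.rpow_nonneg hε0.le _)
      calc ‖a j ε‖ * ‖g ε‖ * ‖E ε‖ * (lam⁻¹)^(j+1)
          ≤ (CB j 0 * ε ^ (μ - (j:ℝ))) * Mg 0 * 1 * (lam⁻¹)^(j+1) := by
            refine mul_le_mul_of_nonneg_right ?_ hP0
            refine mul_le_mul (mul_le_mul h1' h2 (norm_nonneg _) hnn) h3 (norm_nonneg _) ?_
            exact mul_nonneg hnn (hMg0 0)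
        _ = CB j 0 * Mg 0 * (ε ^ (μ - (j:ℝ)) * (lam⁻¹)^(j+1)) := by ring
        _ = CB j 0 * Mg 0 * lam ^ (-μ-1) := by rw [hpow]
    · have hz : a j ε = 0 := image_eq_zero_of_notMem_tsupport (fun h => hεK (hasupp j h))
      rw [hz, norm_zero, zero_mul, zero_mul, zero_mul]
      exact mul_nonneg (mul_nonneg (hCB0 j 0) (hMg0 0)) (Real.rpow_nonneg hl0.le _)
  -- remainder term
  have hrem : ‖((Complex.I*(lam:ℂ))⁻¹)^N * ∫ x in ε..11, a N x * E x‖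
      ≤ CB N 0 / ((N:ℝ)-μ-1) * lam ^ (-μ-1) := by
    have hb2 : ∀ x ∈ Icc ε 11, ‖a N x * E x‖ ≤ CB N 0 * x ^ (μ - (N:ℝ)) := by
      intro x hx
      have hx0 : (0:ℝ) < x := hIcc_pos hx
      by_cases hxK : x ∈ K
      · have hx10 : x ≤ 10 := (hKsub hxK).2
        have h1 : ‖a N x‖ ≤ CB N 0 * x ^ (μ - (N:ℝ)) := by
          have := hCB N 0 x ⟨hx0, hx10⟩
          rw [iteratedDeriv_zero] at this
          simpa using this
        calc ‖a N x * E x‖ = ‖a N x‖ * ‖E x‖ := norm_mul _ _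
          _ ≤ (CB N 0 * x ^ (μ - (N:ℝ))) * 1 := mul_le_mul h1 (hEnorm x hxK) (norm_nonneg _)
              (mul_nonneg (hCB0 N 0) (Real.rpow_nonneg hx0.le _))
          _ = CB N 0 * x ^ (μ - (N:ℝ)) := mul_one _
      · have hz : a N x = 0 := image_eq_zero_of_notMem_tsupport (fun h => hxK (hasupp N h))
        rw [hz, zero_mul, norm_zero]
        exact mul_nonneg (hCB0 N 0) (Real.rpow_nonneg hx0.le _)
    have hint1 : IntervalIntegrable (fun x => ‖a N x * E x‖) volume ε 11 := by
      apply ContinuousOn.intervalIntegrable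
      rw [huIcc]
      exact ((hcontOn N).mul hEcont.continuousOn).norm
    have hint2 : IntervalIntegrable (fun x : ℝ => CB N 0 * x ^ (μ - (N:ℝ))) volume ε 11 := by
      apply ContinuousOn.intervalIntegrable
      rw [huIcc]
      refine continuousOn_const.mul (ContinuousOn.rpow_const continuousOn_id fun x hx => ?_)
      exact Or.inl (ne_of_gt (hIcc_pos hx))
    have hle1 : ‖∫ x in ε..11, a N x * E x‖ ≤ ∫ x in ε..11, CB N 0 * x ^ (μ-(N:ℝ)) := by
      refine (intervalIntegral.norm_integral_le_integral_norm (by linarith)).trans ?_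
      refine intervalIntegral.integral_mono_on (by linarith) hint1 hint2 hb2
    have hval : (∫ x in ε..11, CB N 0 * x ^ (μ-(N:ℝ)))
        = CB N 0 * ((11 ^ (μ-(N:ℝ)+1) - ε ^ (μ-(N:ℝ)+1)) / (μ-(N:ℝ)+1)) := by
      rw [intervalIntegral.integral_const_mul, integral_rpow]
      right
      constructor
      · intro h; linarith
      · rw [huIcc]
        intro hmem
        exact absurd hmem.1 (not_le.mpr hε0)
    have hble : (11 ^ (μ-(N:ℝ)+1) - ε ^ (μ-(N:ℝ)+1)) / (μ-(N:ℝ)+1)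
        ≤ ε ^ (μ-(N:ℝ)+1) / ((N:ℝ)-μ-1) := by
      have hA : (0:ℝ) ≤ (11:ℝ) ^ (μ-(N:ℝ)+1) := Real.rpow_nonneg (by norm_num) _
      have hne1 : (μ-(N:ℝ)+1) ≠ 0 := by intro h; linarith
      have heq2 : (11 ^ (μ-(N:ℝ)+1) - ε ^ (μ-(N:ℝ)+1)) / (μ-(N:ℝ)+1)
          = (ε ^ (μ-(N:ℝ)+1) - 11 ^ (μ-(N:ℝ)+1)) / ((N:ℝ)-μ-1) := by
        rw [div_eq_div_iff hne1 hd.ne']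
        ring
      rw [heq2]
      apply div_le_div_of_nonneg_right ?_ ?_
      · linarith
      · exact hd.le
    have hle2 : ‖∫ x in ε..11, a N x * E x‖ ≤ CB N 0 * (ε ^ (μ-(N:ℝ)+1) / ((N:ℝ)-μ-1)) := by
      refine hle1.trans ?_
      rw [hval]
      exact mul_le_mul_of_nonneg_left hble (hCB0 N 0)
    have hNpow : ‖((Complex.I*(lam:ℂ))⁻¹)^N‖ = lam ^ (-((N:ℕ):ℝ)) := by
      rw [norm_pow, hnormIlam, ← Real.rpow_natCast lam⁻¹ N, Real.inv_rpow hl0.le,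
        ← Real.rpow_neg hl0.le]
    calc ‖((Complex.I*(lam:ℂ))⁻¹)^N * ∫ x in ε..11, a N x * E x‖
        = ‖((Complex.I*(lam:ℂ))⁻¹)^N‖ * ‖∫ x in ε..11, a N x * E x‖ := norm_mul _ _
      _ ≤ lam ^ (-((N:ℕ):ℝ)) * (CB N 0 * (ε ^ (μ-(N:ℝ)+1) / ((N:ℝ)-μ-1))) := by
          rw [hNpow]
          exact mul_le_mul_of_nonneg_left hle2 (Real.rpow_nonneg hl0.le _)
      _ = CB N 0 / ((N:ℝ)-μ-1) * (lam ^ (-((N:ℕ):ℝ)) * lam ^ (-(μ-(N:ℝ)+1))) := by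
          rw [hinvpow (μ-(N:ℝ)+1)]; ring
      _ = CB N 0 / ((N:ℝ)-μ-1) * lam ^ (-μ-1) := by
          rw [← Real.rpow_add hl0]
          congr 1; ring
  -- combine
  have hfinal : ‖∫ x in Ioi (0:ℝ), γ x * E x‖ ≤ Ctot * lam ^ (-μ-1) := by
    rw [hIoi, hsplit2]
    have hIoc : (∫ x in Ioc ε 11, γ x * E x) = ∫ x in ε..11, γ x * E x :=
      (intervalIntegral.integral_of_le (by linarith : ε ≤ 11)).symm
    rw [hIoc, hIBP]
    refine (norm_add_le _ _).trans ?_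
    refine le_trans (add_le_add hpiece1 ((norm_add_le _ _).trans (add_le_add hsum hrem))) ?_
    rw [hCt]
    exact le_of_eq (by ring)
  calc ‖∫ x in Ioi (0:ℝ), γ x * Complex.exp (Complex.I * lam * f x)‖
      = ‖∫ x in Ioi (0:ℝ), γ x * E x‖ := rfl
    _ ≤ Ctot * lam ^ (-μ-1) := hfinal
    _ ≤ (Ctot + 1) * lam ^ (-μ - 1) :=
        mul_le_mul_of_nonneg_right (by linarith) (Real.rpow_nonneg hl0.le _)
end

section
/- Let ν > 0 and α ∈ ℕ. There is a constant C = C(ν,α) > 0 such that the Beta function B(m, 2ν) = ∫₀¹ t^{m-1}(1-t)^{2ν-1} dt, viewed as a smooth function of the real variable m ∈ [1,∞), satisfies |∂ₘ^α B(m, 2ν)| ≤ C m^{-2ν-α} for all m ≥ 1. -/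
/-!
Differentiating under the integral sign gives
`∂ₘ^α B(m, 2ν) = ∫₀¹ t^{m-1} (log t)^α (1-t)^{2ν-1} dt` for `m > 0`. As `t^{m-1}` decreases
in `m` on `(0, 1]`, this is bounded for `m ≥ 1` by the integral of the absolute value at `m = 1`,
which settles bounded `m`. For large `m`, the inequalities `|log t| ≤ (1-t)/t` and
`t^y ≤ e^{-y(1-t)}` bound the integrand by `(1-t)^{s-1} e^{-(m-1-α)(1-t)}` with `s = 2ν + α`,
and after the change of variables `u = 1 - t` the integral is at most the Gamma integral
`Γ(s) (m-1-α)^{-s}`.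
-/

open MeasureTheory

/-- The Beta function `B(m, 2ν) = ∫₀¹ t^{m-1}(1-t)^{2ν-1} dt` as a function of `m`. -/
noncomputable def betaFn (ν : ℝ) (m : ℝ) : ℝ :=
  ∫ t in (0 : ℝ)..1, t ^ (m - 1) * (1 - t) ^ (2 * ν - 1)

open Set Real intervalIntegral Topology

lemma neg_log_le_one_sub_div {t : ℝ} (ht : 0 < t) : -log t ≤ (1 - t) / t :=
  calc -log t = log t⁻¹ := (log_inv t).symm
    _ ≤ t⁻¹ - 1 := log_le_sub_one_of_pos (inv_pos.2 ht)
    _ = (1 - t) / t := by field_simp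

lemma abs_log_pow_le {t δ : ℝ} (k : ℕ) (ht₀ : 0 < t) (ht₁ : t ≤ 1) (hδ : 0 < δ) :
    |log t| ^ k ≤ δ⁻¹ ^ k * t ^ (-(k * δ)) := by
  have h : |log t| ≤ δ⁻¹ * t ^ (-δ) := by
    rw [abs_of_nonpos (log_nonpos ht₀.le ht₁), ← log_inv, rpow_neg ht₀.le, ← inv_rpow ht₀.le,
      inv_mul_eq_div]
    exact log_le_rpow_div (inv_nonneg.2 ht₀.le) hδ
  calc |log t| ^ k ≤ (δ⁻¹ * t ^ (-δ)) ^ k := pow_le_pow_left₀ (abs_nonneg _) h k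
    _ = δ⁻¹ ^ k * t ^ (-(k * δ)) := by
      rw [mul_pow, ← rpow_natCast (t ^ (-δ)), ← rpow_mul ht₀.le]
      ring_nf

lemma rpow_le_exp_neg_mul_one_sub {t y : ℝ} (ht : 0 ≤ t) (hy : 0 ≤ y) :
    t ^ y ≤ exp (-(y * (1 - t))) :=
  calc t ^ y ≤ exp (t - 1) ^ y := rpow_le_rpow ht (by linarith [add_one_le_exp (t - 1)]) hy
    _ = exp (-(y * (1 - t))) := by rw [← exp_mul]; ring_nf

lemma intervalIntegrable_rpow_mul_one_sub_rpow_zero_half {p : ℝ} (q : ℝ) (hp : -1 < p) :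
    IntervalIntegrable (fun t : ℝ => t ^ p * (1 - t) ^ q) volume 0 (1 / 2) := by
  refine (intervalIntegrable_rpow' hp).mul_continuousOn <|
    ContinuousOn.rpow_const (by fun_prop) fun t ht => Or.inl ?_
  rw [uIcc_of_le (by norm_num)] at ht
  linarith [ht.2]

lemma intervalIntegrable_rpow_mul_one_sub_rpow {p q : ℝ} (hp : -1 < p) (hq : -1 < q) :
    IntervalIntegrable (fun t : ℝ => t ^ p * (1 - t) ^ q) volume 0 1 := by
  refine (intervalIntegrable_rpow_mul_one_sub_rpow_zero_half q hp).trans ?_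
  have h := ((intervalIntegrable_rpow_mul_one_sub_rpow_zero_half p hq).comp_sub_left 1).symm
  norm_num at h
  simpa only [mul_comm] using h

lemma intervalIntegrable_rpow_mul_log_pow_mul_one_sub_rpow {p q : ℝ} (k : ℕ) (hp : -1 < p)
    (hq : -1 < q) :
    IntervalIntegrable (fun t : ℝ => t ^ p * log t ^ k * (1 - t) ^ q) volume 0 1 := by
  set δ := (p + 1) / (2 * (k + 1))
  have hδ : 0 < δ := div_pos (by linarith) (by positivity)
  have hkδ : -1 < p - k * δ := by
    have : ((k : ℝ) + 1) * δ = (p + 1) / 2 := by simp only [δ]; field_simp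
    nlinarith
  refine ((intervalIntegrable_rpow_mul_one_sub_rpow hkδ hq).const_mul (δ⁻¹ ^ k)).mono_fun
    (by fun_prop) ((ae_restrict_iff' measurableSet_uIoc).2 (.of_forall fun t ht => ?_))
  rw [uIoc_of_le zero_le_one] at ht
  have hpow : 0 ≤ (1 - t) ^ q := rpow_nonneg (sub_nonneg.2 ht.2) q
  dsimp only
  rw [norm_mul, norm_mul, norm_pow, norm_of_nonneg (rpow_nonneg ht.1.le p), norm_of_nonneg hpow,
    norm_eq_abs, norm_of_nonneg (by have := rpow_nonneg ht.1.le (p - k * δ); positivity)]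
  calc t ^ p * |log t| ^ k * (1 - t) ^ q
      ≤ t ^ p * (δ⁻¹ ^ k * t ^ (-(k * δ))) * (1 - t) ^ q := by
        have := rpow_nonneg ht.1.le p
        gcongr
        exact abs_log_pow_le k ht.1 ht.2 hδ
    _ = δ⁻¹ ^ k * (t ^ (p - k * δ) * (1 - t) ^ q) := by
        rw [rpow_sub ht.1, rpow_neg ht.1.le]
        ring

lemma integral_rpow_mul_exp_neg_mul_le {a y : ℝ} (ha : -1 < a) (hy : 0 < y) :
    ∫ u in (0 : ℝ)..1, u ^ a * exp (-(y * u)) ≤ Gamma (a + 1) * y ^ (-(a + 1)) := by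
  have hint : IntegrableOn (fun u : ℝ => u ^ a * exp (-(y * u))) (Ioi 0) := by
    simpa only [rpow_one, neg_mul] using integrableOn_rpow_mul_exp_neg_mul_rpow ha one_pos hy
  calc ∫ u in (0 : ℝ)..1, u ^ a * exp (-(y * u))
      ≤ ∫ u in Ioi 0, u ^ a * exp (-(y * u)) := by
        rw [integral_of_le zero_le_one]
        refine setIntegral_mono_set hint ?_ Ioc_subset_Ioi_self.eventuallyLE
        filter_upwards [ae_restrict_mem measurableSet_Ioi] with u hu
        have := rpow_nonneg (le_of_lt hu) a
        positivity
    _ = Gamma (a + 1) * y ^ (-(a + 1)) := by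
        rw [← add_sub_cancel_right a 1, integral_rpow_mul_exp_neg_mul_Ioi (by linarith) hy,
          add_sub_cancel_right, one_div, inv_rpow hy.le, rpow_neg hy.le, mul_comm]

lemma le_mul_rpow_neg_of_le_of_le {x K D M s m : ℝ} (hK : 0 ≤ K) (hD : 0 ≤ D) (hM : 0 ≤ M)
    (hm : 0 < m) (hs : 0 ≤ s) (hsmall : m ≤ M → x ≤ K) (hlarge : M ≤ m → x ≤ D * m ^ (-s)) :
    x ≤ (K * M ^ s + D) * m ^ (-s) := by
  have hms : 0 < m ^ (-s) := rpow_pos_of_pos hm _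
  rcases le_total m M with h | h
  · have hM : 1 ≤ M ^ s * m ^ (-s) := by
      rw [rpow_neg hm.le, ← div_eq_mul_inv, one_le_div (rpow_pos_of_pos hm s)]
      exact rpow_le_rpow hm.le h hs
    nlinarith [hsmall h]
  · have : 0 ≤ K * M ^ s := mul_nonneg hK (rpow_nonneg hM s)
    nlinarith [hlarge h]

noncomputable def logBetaIntegrand (b : ℝ) (k : ℕ) (m t : ℝ) : ℝ :=
  t ^ (m - 1) * log t ^ k * (1 - t) ^ b

noncomputable def logBetaIntegral (b : ℝ) (k : ℕ) (m : ℝ) : ℝ :=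
  ∫ t in (0 : ℝ)..1, logBetaIntegrand b k m t

@[fun_prop]
lemma measurable_logBetaIntegrand (b : ℝ) (k : ℕ) (m : ℝ) :
    Measurable (logBetaIntegrand b k m) := by
  unfold logBetaIntegrand
  fun_prop

section LogBetaIntegral

variable {b : ℝ} (k : ℕ) {m : ℝ}

lemma intervalIntegrable_logBetaIntegrand (hb : -1 < b) (hm : 0 < m) :
    IntervalIntegrable (logBetaIntegrand b k m) volume 0 1 :=
  intervalIntegrable_rpow_mul_log_pow_mul_one_sub_rpow k (by linarith) hb

lemma norm_logBetaIntegrand_le_of_le {m' t : ℝ} (ht : t ∈ Ioc (0 : ℝ) 1) (h : m' ≤ m) :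
    ‖logBetaIntegrand b k m t‖ ≤ ‖logBetaIntegrand b k m' t‖ := by
  have : t ^ (m - 1) ≤ t ^ (m' - 1) := rpow_le_rpow_of_exponent_ge ht.1 ht.2 (by linarith)
  simp only [logBetaIntegrand, norm_mul, norm_of_nonneg (rpow_nonneg ht.1.le _)]
  gcongr

lemma hasDerivAt_logBetaIntegrand {t : ℝ} (ht : 0 < t) :
    HasDerivAt (logBetaIntegrand b k · t) (logBetaIntegrand b (k + 1) m t) m := by
  have h := (((hasDerivAt_id m).sub_const 1).const_rpow ht).mul_const (log t ^ k)
  exact (h.mul_const _).congr_deriv (by simp only [logBetaIntegrand, id]; ring)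

lemma hasDerivAt_logBetaIntegral (hb : -1 < b) (hm : 0 < m) :
    HasDerivAt (logBetaIntegral b k) (logBetaIntegral b (k + 1) m) m := by
  have hI : uIoc (0 : ℝ) 1 = Ioc 0 1 := uIoc_of_le zero_le_one
  exact (intervalIntegral.hasDerivAt_integral_of_dominated_loc_of_deriv_le
    (F := logBetaIntegrand b k) (F' := logBetaIntegrand b (k + 1))
    (Ioi_mem_nhds (half_lt_self hm)) (.of_forall fun _ => by fun_prop)
    (intervalIntegrable_logBetaIntegrand k hb hm) (by fun_prop)
    (.of_forall fun _ ht _ hx =>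
      norm_logBetaIntegrand_le_of_le (k + 1) (hI ▸ ht) (le_of_lt hx))
    (intervalIntegrable_logBetaIntegrand (k + 1) hb (half_pos hm)).norm
    (.of_forall fun _ ht _ _ => hasDerivAt_logBetaIntegrand k (hI ▸ ht).1)).2

lemma iteratedDeriv_logBetaIntegral_zero (hb : -1 < b) (hm : 0 < m) :
    iteratedDeriv k (logBetaIntegral b 0) m = logBetaIntegral b k m := by
  induction k generalizing m with
  | zero => rfl
  | succ k ih =>
    have h : iteratedDeriv k (logBetaIntegral b 0) =ᶠ[𝓝 m] logBetaIntegral b k :=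
      (eventually_gt_nhds hm).mono fun _ hx => ih hx
    rw [iteratedDeriv_succ, h.deriv_eq, (hasDerivAt_logBetaIntegral k hb hm).deriv]

lemma abs_logBetaIntegral_le_of_le (hb : -1 < b) {m' : ℝ} (hm' : 0 < m') (h : m' ≤ m) :
    |logBetaIntegral b k m| ≤ ∫ t in (0 : ℝ)..1, ‖logBetaIntegrand b k m' t‖ :=
  norm_integral_le_of_norm_le zero_le_one
    (.of_forall fun _ ht => norm_logBetaIntegrand_le_of_le k ht h)
    (intervalIntegrable_logBetaIntegrand k hb hm').norm

lemma norm_logBetaIntegrand_le {t : ℝ} (ht₀ : 0 < t) (ht₁ : t < 1) (hm : k + 1 ≤ m) :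
    ‖logBetaIntegrand b k m t‖ ≤ (1 - t) ^ (b + k) * exp (-((m - 1 - k) * (1 - t))) := by
  have ht₁' : 0 < 1 - t := sub_pos.2 ht₁
  have hlog : |log t| ^ k ≤ ((1 - t) / t) ^ k := by
    gcongr
    rw [abs_of_nonpos (log_nonpos ht₀.le ht₁.le)]
    exact neg_log_le_one_sub_div ht₀
  calc ‖logBetaIntegrand b k m t‖ = t ^ (m - 1) * |log t| ^ k * (1 - t) ^ b := by
        simp only [logBetaIntegrand, norm_mul, norm_pow, norm_eq_abs,
          abs_of_nonneg (rpow_nonneg ht₀.le _), abs_of_nonneg (rpow_nonneg ht₁'.le _)]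
    _ ≤ t ^ (m - 1) * ((1 - t) / t) ^ k * (1 - t) ^ b := by gcongr
    _ = t ^ (m - 1 - k) * (1 - t) ^ (b + k) := by
        rw [div_pow, ← rpow_natCast, ← rpow_natCast, rpow_sub ht₀ (m - 1), rpow_add ht₁']
        field_simp
    _ ≤ exp (-((m - 1 - k) * (1 - t))) * (1 - t) ^ (b + k) := by
        gcongr
        exact rpow_le_exp_neg_mul_one_sub ht₀.le (by linarith)
    _ = (1 - t) ^ (b + k) * exp (-((m - 1 - k) * (1 - t))) := mul_comm _ _

lemma abs_logBetaIntegral_le_Gamma_mul (hb : -1 < b) (hm : k + 1 < m) :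
    |logBetaIntegral b k m| ≤ Gamma (b + k + 1) * (m - 1 - k) ^ (-(b + k + 1)) := by
  have hbk : -1 < b + k := by linarith [(Nat.cast_nonneg k : (0 : ℝ) ≤ k)]
  have hI : IntervalIntegrable (fun u : ℝ => u ^ (b + k) * exp (-((m - 1 - k) * u)))
      volume 0 1 :=
    (intervalIntegrable_rpow' hbk).mul_continuousOn (by fun_prop)
  have hne : ∀ᵐ t : ℝ, t ≠ 1 := Measure.ae_ne volume 1
  calc |logBetaIntegral b k m|
      ≤ ∫ t in (0 : ℝ)..1, (1 - t) ^ (b + k) * exp (-((m - 1 - k) * (1 - t))) := by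
        refine norm_integral_le_of_norm_le (f := logBetaIntegrand b k m) zero_le_one ?_
          (by simpa using (hI.comp_sub_left 1).symm)
        filter_upwards [hne] with t ht₁ ht
        exact norm_logBetaIntegrand_le k ht.1 (lt_of_le_of_ne ht.2 ht₁) hm.le
    _ = ∫ u in (0 : ℝ)..1, u ^ (b + k) * exp (-((m - 1 - k) * u)) := by
        simp [integral_comp_sub_left fun u => u ^ (b + k) * exp (-((m - 1 - k) * u))]
    _ ≤ Gamma (b + k + 1) * (m - 1 - k) ^ (-(b + k + 1)) :=
        integral_rpow_mul_exp_neg_mul_le hbk (by linarith)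

theorem exists_abs_logBetaIntegral_le (hb : -1 < b) :
    ∃ C, 0 < C ∧ ∀ m, 1 ≤ m → |logBetaIntegral b k m| ≤ C * m ^ (-(b + k + 1)) := by
  set s := b + k + 1
  have hs : 0 < s := by linarith [(Nat.cast_nonneg k : (0 : ℝ) ≤ k)]
  set K := ∫ t in (0 : ℝ)..1, ‖logBetaIntegrand b k 1 t‖
  have hK : 0 ≤ K := integral_nonneg zero_le_one fun _ _ => norm_nonneg _
  have hΓ : 0 < Gamma s * 2 ^ s := by have := Gamma_pos_of_pos hs; positivity
  refine ⟨K * (2 * (k + 1)) ^ s + Gamma s * 2 ^ s,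
    add_pos_of_nonneg_of_pos (mul_nonneg hK (by positivity)) hΓ, fun m hm => ?_⟩
  have hm₀ : 0 < m := by linarith
  refine le_mul_rpow_neg_of_le_of_le hK hΓ.le (by positivity) hm₀ hs.le
    (fun _ => abs_logBetaIntegral_le_of_le k hb one_pos hm) fun hlarge => ?_
  calc |logBetaIntegral b k m| ≤ Gamma s * (m - 1 - k) ^ (-s) :=
        abs_logBetaIntegral_le_Gamma_mul k hb (by linarith)
    _ ≤ Gamma s * (m / 2) ^ (-s) :=
        mul_le_mul_of_nonneg_left (rpow_le_rpow_of_nonpos (by positivity) (by linarith)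
          (by linarith)) (Gamma_pos_of_pos hs).le
    _ = Gamma s * 2 ^ s * m ^ (-s) := by
        rw [div_rpow hm₀.le zero_le_two, rpow_neg zero_le_two, div_inv_eq_mul]
        ring

end LogBetaIntegral

lemma betaFn_eq_logBetaIntegral (ν : ℝ) : betaFn ν = logBetaIntegral (2 * ν - 1) 0 := by
  funext m
  simp [betaFn, logBetaIntegral, logBetaIntegrand]

/-- Symbol-type estimates for the Beta function: `|∂ₘ^α B(m, 2ν)| ≤ C m^{-2ν-α}` for `m ≥ 1`. -/
theorem betaFn_iteratedDeriv_bound (ν : ℝ) (hν : 0 < ν) (α : ℕ) :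
    ∃ C : ℝ, 0 < C ∧ ∀ m : ℝ, 1 ≤ m →
      |iteratedDeriv α (betaFn ν) m| ≤ C * m ^ (-(2 * ν) - α) := by
  have hb : -1 < 2 * ν - 1 := by linarith
  obtain ⟨C, hC, hbound⟩ := exists_abs_logBetaIntegral_le α hb
  refine ⟨C, hC, fun m hm => ?_⟩
  rw [betaFn_eq_logBetaIntegral, iteratedDeriv_logBetaIntegral_zero α hb (by linarith)]
  convert hbound m hm using 3
  ring
end

section
/- Let S : ℝ → ℝ be smooth and ζ : ℝ → ℂ be smooth and compactly supported. Then Σ_{m∈ℤ} e^{iS(m)} ζ(m) = ∫_ℝ e^{iS(m)} ζ(m) dm − (1/(2πi)) Σ_{q∈ℤ\{0}} (1/q) ∫_ℝ e^{i(S(m)+2πqm)} (ζ'(m) + iS'(m)ζ(m)) dm. -/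
set_option maxHeartbeats 1000000

open MeasureTheory

open scoped FourierTransform Real

namespace PoissonAux

noncomputable def negEquiv : {q : ℤ // q ≠ 0} ≃ {q : ℤ // q ≠ 0} where
  toFun q := ⟨-q.1, neg_ne_zero.mpr q.2⟩
  invFun q := ⟨-q.1, neg_ne_zero.mpr q.2⟩
  left_inv q := by simp
  right_inv q := by simp

variable (S : ℝ → ℝ) (ζ : ℝ → ℂ)

lemma smooth_f (hS : ContDiff ℝ (⊤ : ℕ∞) S) (hζ : ContDiff ℝ (⊤ : ℕ∞) ζ) :
    ContDiff ℝ (⊤ : ℕ∞) (fun m : ℝ => Complex.exp (Complex.I * S m) * ζ m) := by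
  apply ContDiff.mul _ hζ
  exact Complex.contDiff_exp.comp (contDiff_const.mul (Complex.ofRealCLM.contDiff.comp hS))

lemma hasDerivAt_f (hS : ContDiff ℝ (⊤ : ℕ∞) S) (hζ : ContDiff ℝ (⊤ : ℕ∞) ζ) (m : ℝ) :
    HasDerivAt (fun m : ℝ => Complex.exp (Complex.I * S m) * ζ m)
      (Complex.exp (Complex.I * S m) * (deriv ζ m + Complex.I * deriv S m * ζ m)) m := by
  have hSd : HasDerivAt S (deriv S m) m := (hS.differentiable (by simp) m).hasDerivAt
  have hζd : HasDerivAt ζ (deriv ζ m) m := (hζ.differentiable (by simp) m).hasDerivAt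
  have h1 : HasDerivAt (fun x : ℝ => Complex.I * (S x : ℂ)) (Complex.I * deriv S m) m :=
    (hSd.ofReal_comp).const_mul Complex.I
  have h3 : HasDerivAt (fun x : ℝ => Complex.exp (Complex.I * (S x : ℂ)) * ζ x) _ m :=
    h1.cexp.mul hζd
  convert h3 using 1
  ring

/-- Key integration-by-parts identity. -/
lemma key (hS : ContDiff ℝ (⊤ : ℕ∞) S) (hζ : ContDiff ℝ (⊤ : ℕ∞) ζ) (hc : HasCompactSupport ζ) (q : ℤ) :
    (∫ m : ℝ, Complex.exp (Complex.I * (S m + 2 * Real.pi * q * m)) *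
        (deriv ζ m + Complex.I * deriv S m * ζ m))
      = (-(2 * Real.pi * Complex.I * q)) *
          𝓕 (fun m : ℝ => Complex.exp (Complex.I * S m) * ζ m) (-(q : ℝ)) := by
  have hfd := hasDerivAt_f S ζ hS hζ
  have hvd : ∀ m : ℝ,
      HasDerivAt (fun m : ℝ => Complex.exp (((2 * Real.pi * q * m : ℝ) : ℂ) * Complex.I))
        (Complex.exp (((2 * Real.pi * q * m : ℝ) : ℂ) * Complex.I)
          * (((2 * Real.pi * q : ℝ) : ℂ) * Complex.I)) m := by
    intro m
    have h1 : HasDerivAt (fun x : ℝ => (2 * Real.pi * q) * x) (2 * Real.pi * q) m := by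
      simpa using (hasDerivAt_id m).const_mul (2 * Real.pi * (q : ℝ))
    exact (h1.ofReal_comp.mul_const Complex.I).cexp
  -- continuity facts
  have hcontf : Continuous fun m : ℝ => Complex.exp (Complex.I * S m) * ζ m :=
    (smooth_f S ζ hS hζ).continuous
  have hcontf' : Continuous fun m : ℝ =>
      Complex.exp (Complex.I * S m) * (deriv ζ m + Complex.I * deriv S m * ζ m) := by
    apply Continuous.mul
    · exact (Complex.continuous_exp.comp (continuous_const.mul
        (Complex.continuous_ofReal.comp hS.continuous)))
    · exact ((hζ.continuous_deriv (by simp)).add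
        ((continuous_const.mul (Complex.continuous_ofReal.comp
          (hS.continuous_deriv (by simp)))).mul hζ.continuous))
  have hcontv : Continuous fun m : ℝ =>
      Complex.exp (((2 * Real.pi * q * m : ℝ) : ℂ) * Complex.I) :=
    Complex.continuous_exp.comp
      ((Complex.continuous_ofReal.comp (by fun_prop)).mul continuous_const)
  -- compact support facts
  have hcf : HasCompactSupport fun m : ℝ => Complex.exp (Complex.I * S m) * ζ m := hc.mul_left
  have hcf' : HasCompactSupport fun m : ℝ =>
      Complex.exp (Complex.I * S m) * (deriv ζ m + Complex.I * deriv S m * ζ m) :=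
    HasCompactSupport.mul_left ((hc.deriv).add hc.mul_left)
  -- integrability
  have hi1 : Integrable ((fun m : ℝ => Complex.exp (Complex.I * S m) * ζ m) *
      fun m : ℝ => Complex.exp (((2 * Real.pi * q * m : ℝ) : ℂ) * Complex.I)
        * (((2 * Real.pi * q : ℝ) : ℂ) * Complex.I)) :=
    (hcontf.mul (hcontv.mul continuous_const)).integrable_of_hasCompactSupport hcf.mul_right
  have hi2 : Integrable ((fun m : ℝ =>
      Complex.exp (Complex.I * S m) * (deriv ζ m + Complex.I * deriv S m * ζ m)) *
      fun m : ℝ => Complex.exp (((2 * Real.pi * q * m : ℝ) : ℂ) * Complex.I)) :=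
    (hcontf'.mul hcontv).integrable_of_hasCompactSupport hcf'.mul_right
  have hi3 : Integrable ((fun m : ℝ => Complex.exp (Complex.I * S m) * ζ m) *
      fun m : ℝ => Complex.exp (((2 * Real.pi * q * m : ℝ) : ℂ) * Complex.I)) :=
    (hcontf.mul hcontv).integrable_of_hasCompactSupport hcf.mul_right
  have hibp := integral_mul_deriv_eq_deriv_mul_of_integrable (fun x _ => hfd x) (fun x _ => hvd x) hi1 hi2 hi3
  have hFour : 𝓕 (fun m : ℝ => Complex.exp (Complex.I * S m) * ζ m) (-(q : ℝ))
      = ∫ m : ℝ, (Complex.exp (Complex.I * S m) * ζ m)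
          * Complex.exp (((2 * Real.pi * q * m : ℝ) : ℂ) * Complex.I) := by
    rw [Real.fourier_real_eq_integral_exp_smul]
    apply integral_congr_ae
    filter_upwards with m
    rw [smul_eq_mul, mul_comm]
    congr 2
    push_cast
    ring
  have hInt : (∫ m : ℝ, Complex.exp (Complex.I * (S m + 2 * Real.pi * q * m)) *
        (deriv ζ m + Complex.I * deriv S m * ζ m))
      = ∫ m : ℝ, (Complex.exp (Complex.I * S m) * (deriv ζ m + Complex.I * deriv S m * ζ m))
          * Complex.exp (((2 * Real.pi * q * m : ℝ) : ℂ) * Complex.I) := by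
    apply integral_congr_ae
    filter_upwards with m
    have e : Complex.exp (Complex.I * (S m + 2 * Real.pi * q * m))
        = Complex.exp (Complex.I * S m)
          * Complex.exp (((2 * Real.pi * q * m : ℝ) : ℂ) * Complex.I) := by
      rw [← Complex.exp_add]
      congr 1
      push_cast
      ring
    rw [e]
    ring
  have hPull : (∫ m : ℝ, (Complex.exp (Complex.I * S m) * ζ m)
        * (Complex.exp (((2 * Real.pi * q * m : ℝ) : ℂ) * Complex.I)
            * (((2 * Real.pi * q : ℝ) : ℂ) * Complex.I)))
      = (((2 * Real.pi * q : ℝ) : ℂ) * Complex.I)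
          * ∫ m : ℝ, (Complex.exp (Complex.I * S m) * ζ m)
              * Complex.exp (((2 * Real.pi * q * m : ℝ) : ℂ) * Complex.I) := by
    rw [← integral_const_mul]
    apply integral_congr_ae
    filter_upwards with m
    ring
  rw [hInt, hFour]
  have hibp' : (∫ m : ℝ, (Complex.exp (Complex.I * S m)
        * (deriv ζ m + Complex.I * deriv S m * ζ m))
          * Complex.exp (((2 * Real.pi * q * m : ℝ) : ℂ) * Complex.I))
      = - ∫ m : ℝ, (Complex.exp (Complex.I * S m) * ζ m)
          * (Complex.exp (((2 * Real.pi * q * m : ℝ) : ℂ) * Complex.I)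
              * (((2 * Real.pi * q : ℝ) : ℂ) * Complex.I)) := by
    linear_combination hibp
  rw [hibp', hPull]
  push_cast
  ring

end PoissonAux

/-- Poisson-summation-type formula:
`∑_{m∈ℤ} e^{iS(m)} ζ(m) = ∫_ℝ e^{iS} ζ − (1/(2πi)) ∑_{q≠0} (1/q) ∫_ℝ e^{i(S+2πqm)} (ζ' + iS'ζ)`. -/
theorem poisson_type_formula (S : ℝ → ℝ) (hS : ContDiff ℝ (⊤ : ℕ∞) S)
    (ζ : ℝ → ℂ) (hζ : ContDiff ℝ (⊤ : ℕ∞) ζ) (hc : HasCompactSupport ζ) :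
    ∑' m : ℤ, Complex.exp (Complex.I * S m) * ζ m
      = (∫ m : ℝ, Complex.exp (Complex.I * S m) * ζ m)
        - (1 / (2 * Real.pi * Complex.I)) *
            ∑' q : {q : ℤ // q ≠ 0},
              (1 / ((q : ℤ) : ℂ)) *
                ∫ m : ℝ, Complex.exp (Complex.I * (S m + 2 * Real.pi * (q : ℤ) * m)) *
                  (deriv ζ m + Complex.I * deriv S m * ζ m) := by
  set f : ℝ → ℂ := fun m : ℝ => Complex.exp (Complex.I * S m) * ζ m with hfdef
  have hf : ContDiff ℝ (⊤ : ℕ∞) f := PoissonAux.smooth_f S ζ hS hζ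
  have hcf : HasCompactSupport f := hc.mul_left
  -- Schwartz function
  let fS : SchwartzMap ℝ ℂ :=
    { toFun := f
      smooth' := hf.of_le (by simp)
      decay' := by
        intro k n
        have hcont : Continuous fun x : ℝ => ‖x‖ ^ k * ‖iteratedFDeriv ℝ n f x‖ :=
          ((continuous_norm.pow k).mul
            ((hf.continuous_iteratedFDeriv (by exact_mod_cast le_top)).norm))
        have hsupp : HasCompactSupport fun x : ℝ => ‖x‖ ^ k * ‖iteratedFDeriv ℝ n f x‖ :=
          ((hcf.iteratedFDeriv n).norm).mul_left
        obtain ⟨C, hC⟩ := hcont.bounded_above_of_compact_support hsupp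
        refine ⟨C, fun x => ?_⟩
        have h := hC x
        rw [Real.norm_eq_abs] at h
        exact (le_abs_self _).trans h }
  have hcoe : ∀ x : ℝ, fS x = f x := fun _ => rfl
  have hsum : Summable fun q : ℤ => 𝓕 f q := by
    have h1 := (SchwartzMap.fourierTransformCLM ℝ fS).isBigO_cocompact_rpow (-2)
    have h2 := h1.comp_tendsto Int.tendsto_coe_cofinite
    have := summable_of_isBigO (Real.summable_abs_int_rpow one_lt_two) h2
    exact this

  have poisson := fS.tsum_eq_tsum_fourier 0
  simp only [zero_add, QuotientAddGroup.mk_zero, fourier_eval_zero, mul_one,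
    SchwartzMap.fourierTransformCLM_apply] at poisson
  have hL : (∑' m : ℤ, Complex.exp (Complex.I * S m) * ζ m) = ∑' q : ℤ, 𝓕 f q :=
    poisson
  rw [hL]
  -- split off q = 0
  rw [hsum.tsum_eq_add_tsum_ite 0]
  have hzero : 𝓕 f (((0 : ℤ) : ℝ)) = ∫ m : ℝ, Complex.exp (Complex.I * S m) * ζ m := by
    rw [Real.fourier_real_eq_integral_exp_smul]
    simp [hfdef]
  have hrest : (∑' q : ℤ, if q = 0 then 0 else 𝓕 f q)
      = ∑' q : {q : ℤ // q ≠ 0}, 𝓕 f ((q : ℤ) : ℝ) := by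
    rw [← tsum_subtype_eq_of_support_subset (s := {q : ℤ | q ≠ 0}) (by
      intro q hq
      simp only [Function.mem_support] at hq
      by_contra h
      simp only [Set.mem_setOf_eq, not_not] at h
      exact hq (by simp [h]))]
    apply tsum_congr
    intro q
    exact if_neg q.2
  rw [hrest]
  have hterm : (∑' q : {q : ℤ // q ≠ 0}, 𝓕 f ((q : ℤ) : ℝ))
      = - (1 / (2 * Real.pi * Complex.I)) *
          ∑' q : {q : ℤ // q ≠ 0},
            (1 / ((q : ℤ) : ℂ)) *
              ∫ m : ℝ, Complex.exp (Complex.I * (S m + 2 * Real.pi * (q : ℤ) * m)) *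
                (deriv ζ m + Complex.I * deriv S m * ζ m) := by
    rw [← PoissonAux.negEquiv.tsum_eq (fun q : {q : ℤ // q ≠ 0} => 𝓕 f ((q : ℤ) : ℝ))]
    rw [← tsum_mul_left]
    apply tsum_congr
    intro q
    have hkey := PoissonAux.key S ζ hS hζ hc q
    have hq : ((q : ℤ) : ℂ) ≠ 0 := by
      exact_mod_cast (Int.cast_injective.ne_iff.mpr q.2 : ((q : ℤ) : ℂ) ≠ ((0 : ℤ) : ℂ))
    have hπ : (Real.pi : ℂ) ≠ 0 := by exact_mod_cast Real.pi_ne_zero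
    have hNeg : 𝓕 f ((((PoissonAux.negEquiv q) : ℤ)) : ℝ) = 𝓕 f (-((q : ℤ) : ℝ)) := by
      simp [PoissonAux.negEquiv]
    rw [hNeg]
    have h𝓕 : 𝓕 f (-((q : ℤ) : ℝ))
        = (∫ m : ℝ, Complex.exp (Complex.I * (S m + 2 * Real.pi * (q : ℤ) * m)) *
            (deriv ζ m + Complex.I * deriv S m * ζ m)) / (-(2 * Real.pi * Complex.I * (q : ℤ))) := by
      rw [hkey]
      field_simp
      rfl
    rw [h𝓕]
    field_simp
  rw [hterm, hzero]
  ring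
end

section
/- Let γ ∈ C^∞(ℝ∖{0}) ∩ C_c(ℝ) and f ∈ C^∞(ℝ;ℝ). Suppose |∂ₓ^β γ(x)| ≲ |x|^{ν-β} for x ≠ 0 (some ν ≥ 0) and f''(x) ≠ 0 for all x in supp γ. Then |∫_ℝ γ(x) e^{iλ f(x)} dx| ≲ λ^{-1/2} for λ ≥ 1. -/
open MeasureTheory Set intervalIntegral

lemma norm_cexp_Ilam (lam t : ℝ) : ‖Complex.exp (Complex.I * lam * t)‖ = 1 := by
  rw [Complex.norm_exp]
  simp [Complex.mul_re]

lemma vdc1 (f f1 f2 : ℝ → ℝ)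
    (hf1 : ∀ x, HasDerivAt f (f1 x) x)
    (hf2 : ∀ x, HasDerivAt f1 (f2 x) x)
    (hf2c : Continuous f2)
    (lam m : ℝ) (hl : 0 < lam) (hm : 0 < m)
    (s t : ℝ) (hst : s ≤ t)
    (h1 : ∀ x ∈ Icc s t, m ≤ f1 x)
    (h2 : ∀ x ∈ Icc s t, 0 ≤ f2 x) :
    ‖∫ x in s..t, Complex.exp (Complex.I * lam * f x)‖ ≤ 3 / (lam * m) := by
  have hIcc : uIcc s t = Icc s t := uIcc_of_le hst
  have hf1c : Continuous f1 := by
    refine continuous_iff_continuousAt.mpr fun x => (hf2 x).continuousAt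
  have hfc : Continuous f := by
    refine continuous_iff_continuousAt.mpr fun x => (hf1 x).continuousAt
  set w : ℝ → ℂ := fun x => Complex.I * lam * f1 x with hw
  set v : ℝ → ℂ := fun x => Complex.exp (Complex.I * lam * f x) with hv
  set u : ℝ → ℂ := fun x => (w x)⁻¹ with hu
  set u' : ℝ → ℂ := fun x => -(Complex.I * lam * f2 x) / (w x) ^ 2 with hu'
  have hf1pos : ∀ x ∈ Icc s t, 0 < f1 x := fun x hx => lt_of_lt_of_le hm (h1 x hx)
  have hwne : ∀ x ∈ Icc s t, w x ≠ 0 := by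
    intro x hx
    have := (hf1pos x hx).ne'
    simp only [hw, mul_ne_zero_iff]
    exact ⟨⟨Complex.I_ne_zero, by exact_mod_cast hl.ne'⟩, by exact_mod_cast this⟩
  have hvd : ∀ x, HasDerivAt v (w x * v x) x := by
    intro x
    have h0 : HasDerivAt (fun y => Complex.I * lam * (f y : ℂ)) (Complex.I * lam * f1 x) x :=
      ((hf1 x).ofReal_comp).const_mul _
    simpa [hv, hw, mul_comm] using h0.cexp
  have hwd : ∀ x, HasDerivAt w (Complex.I * lam * f2 x) x := fun x =>
    ((hf2 x).ofReal_comp).const_mul _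
  have hud : ∀ x ∈ uIcc s t, HasDerivAt u (u' x) x := by
    intro x hx; rw [hIcc] at hx
    have h := (hasDerivAt_inv (hwne x hx)).comp x (hwd x)
    refine h.congr_deriv ?_; symm
    rw [hu']
    field_simp
  have hwc : Continuous w := by
    exact (continuous_const.mul (Complex.continuous_ofReal.comp hf1c))
  have hvc : Continuous v := by
    exact Complex.continuous_exp.comp (continuous_const.mul (Complex.continuous_ofReal.comp hfc))
  have hu'c : ContinuousOn u' (uIcc s t) := by
    rw [hIcc]
    refine ContinuousOn.div ?_ ?_ ?_
    · exact ((continuous_const.mul (Complex.continuous_ofReal.comp hf2c)).neg).continuousOn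
    · exact (hwc.pow 2).continuousOn
    · intro x hx; exact pow_ne_zero 2 (hwne x hx)
  have hu'i : IntervalIntegrable u' volume s t := hu'c.intervalIntegrable
  have hv'i : IntervalIntegrable (fun x => w x * v x) volume s t :=
    (hwc.mul hvc).intervalIntegrable s t
  have ibp := integral_mul_deriv_eq_deriv_mul hud (fun x _ => hvd x) hu'i hv'i
  have hiv : ∫ x in s..t, v x = ∫ x in s..t, u x * (w x * v x) := by
    refine integral_congr fun x hx => ?_
    rw [hIcc] at hx
    show v x = (w x)⁻¹ * (w x * v x); rw [← mul_assoc, inv_mul_cancel₀ (hwne x hx), one_mul]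
  have hnu : ∀ x ∈ Icc s t, ‖u x‖ ≤ 1 / (lam * m) := by
    intro x hx
    have h1x := h1 x hx
    have hwn : ‖w x‖ = lam * f1 x := by
      simp [hw, norm_mul, Complex.norm_real, abs_of_pos hl, abs_of_pos (hf1pos x hx)]
    rw [hu, norm_inv, hwn, one_div]
    exact inv_anti₀ (by positivity) (by nlinarith [hf1pos x hx])
  have hnv : ∀ x, ‖v x‖ = 1 := fun x => norm_cexp_Ilam lam (f x)
  have hintu' : ∫ x in s..t, ‖u' x‖ ≤ 1 / (lam * m) := by
    have hg : ∀ x ∈ uIcc s t, HasDerivAt (fun y => -(lam * f1 y)⁻¹) (‖u' x‖) x := by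
      intro x hx; rw [hIcc] at hx
      have hfx := hf1pos x hx
      have hne : lam * f1 x ≠ 0 := by positivity
      have hd : HasDerivAt (fun y => lam * f1 y) (lam * f2 x) x := (hf2 x).const_mul lam
      have := (hd.inv hne).neg
      refine this.congr_deriv ?_; symm
      have hwn : ‖w x‖ = lam * f1 x := by
        simp [hw, norm_mul, Complex.norm_real, abs_of_pos hl, abs_of_pos hfx]
      rw [hu', norm_div, norm_neg, norm_pow, hwn]
      have : ‖Complex.I * lam * (f2 x : ℂ)‖ = lam * f2 x := by
        simp [norm_mul, Complex.norm_real, abs_of_pos hl, abs_of_nonneg (h2 x hx)]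
      rw [this]
      field_simp
    have hci : IntervalIntegrable (fun x => ‖u' x‖) volume s t := hu'c.norm.intervalIntegrable
    rw [integral_eq_sub_of_hasDerivAt hg hci]
    have hs' : s ∈ Icc s t := ⟨le_refl s, hst⟩
    have ht' : t ∈ Icc s t := ⟨hst, le_refl t⟩
    have h1s := hf1pos s hs'
    have h1t := hf1pos t ht'
    have : (lam * f1 s)⁻¹ ≤ (lam * m)⁻¹ := by
      exact inv_anti₀ (by positivity) (by nlinarith [h1 s hs'])
    have h2' : 0 < (lam * f1 t)⁻¹ := by positivity
    rw [one_div]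
    linarith
  have hbig : ‖∫ x in s..t, v x‖ ≤ 3 / (lam * m) := by
    rw [hiv, ibp]
    have e1 : ‖u t * v t‖ ≤ 1 / (lam * m) := by
      rw [norm_mul, hnv t, mul_one]; exact hnu t ⟨hst, le_refl t⟩
    have e2 : ‖u s * v s‖ ≤ 1 / (lam * m) := by
      rw [norm_mul, hnv s, mul_one]; exact hnu s ⟨le_refl s, hst⟩
    have e3 : ‖∫ x in s..t, u' x * v x‖ ≤ 1 / (lam * m) := by
      refine le_trans (norm_integral_le_integral_norm hst) ?_
      refine le_trans ?_ hintu'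
      refine le_of_eq (integral_congr fun x hx => ?_)
      rw [norm_mul, hnv x, mul_one]
    calc ‖u t * v t - u s * v s - ∫ x in s..t, u' x * v x‖
        ≤ ‖u t * v t - u s * v s‖ + ‖∫ x in s..t, u' x * v x‖ := norm_sub_le _ _
      _ ≤ ‖u t * v t‖ + ‖u s * v s‖ + ‖∫ x in s..t, u' x * v x‖ := by
          have := norm_sub_le (u t * v t) (u s * v s); linarith
      _ ≤ 1 / (lam * m) + 1 / (lam * m) + 1 / (lam * m) := by linarith
      _ = 3 / (lam * m) := by ring
  exact hbig


lemma f1_lower (f1 f2 : ℝ → ℝ) (hf2 : ∀ x, HasDerivAt f1 (f2 x) x) (a b c : ℝ)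
    (h2 : ∀ x ∈ Icc a b, c ≤ f2 x) :
    ∀ x ∈ Icc a b, ∀ y ∈ Icc a b, x ≤ y → f1 x + c * (y - x) ≤ f1 y := by
  have hg : ∀ z, HasDerivAt (fun y => f1 y - c * y) (f2 z - c) z := by
    intro z
    exact ((hf2 z).sub ((hasDerivAt_id z).const_mul c)).congr_deriv (by ring)
  have hmono : MonotoneOn (fun y => f1 y - c * y) (Icc a b) := by
    refine monotoneOn_of_deriv_nonneg (convex_Icc a b) ?_ ?_ ?_
    · exact (continuous_iff_continuousAt.mpr fun z => (hg z).continuousAt).continuousOn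
    · intro z hz
      exact ((hg z).differentiableAt.differentiableWithinAt)
    · intro z hz
      rw [interior_Icc] at hz
      rw [(hg z).deriv]
      have := h2 z (Ioo_subset_Icc_self hz)
      linarith
  intro x hx y hy hxy
  have := hmono hx hy hxy
  simp only at this
  linarith


set_option maxHeartbeats 1000000 in
lemma side (f f1 f2 : ℝ → ℝ)
    (hf1 : ∀ x, HasDerivAt f (f1 x) x)
    (hf2 : ∀ x, HasDerivAt f1 (f2 x) x)
    (hf2c : Continuous f2)
    (γ γ' : ℝ → ℂ) (lam r c M δ q e : ℝ)
    (hl : 0 < lam) (hr : 0 < r) (hc : 0 < c) (hδ : 0 < δ)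
    (hqe : q ≤ e) (hpos : δ ≤ q ∨ e ≤ -δ)
    (hγd : ∀ x ∈ Icc q e, HasDerivAt γ (γ' x) x)
    (hγ'c : ContinuousOn γ' (Icc q e))
    (hM : ∀ x ∈ Icc q e, ‖γ x‖ ≤ M)
    (h'M : ∀ x ∈ Icc q e, ‖γ' x‖ ≤ M / |x|)
    (hq : r ≤ f1 q)
    (h2 : ∀ x ∈ Icc q e, c ≤ f2 x) :
    ‖∫ x in q..e, γ x * Complex.exp (Complex.I * lam * f x)‖
      ≤ 6 * M / (lam * r) + 3 * M / (lam * c * δ) := by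
  have hIcc : uIcc q e = Icc q e := uIcc_of_le hqe
  have hM0 : 0 ≤ M := le_trans (norm_nonneg _) (hM q ⟨le_refl q, hqe⟩)
  have hfc : Continuous f := continuous_iff_continuousAt.mpr fun x => (hf1 x).continuousAt
  have key : ∀ x ∈ Icc q e, r + c * (x - q) ≤ f1 x := by
    intro x hx
    have := f1_lower f1 f2 hf2 q e c h2 q ⟨le_refl q, hqe⟩ x hx hx.1
    linarith
  have f1pos : ∀ x ∈ Icc q e, 0 < f1 x := by
    intro x hx
    have := key x hx
    nlinarith [hx.1]
  set ph : ℝ → ℂ := fun x => Complex.exp (Complex.I * lam * f x) with hph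
  have vc : Continuous ph :=
    Complex.continuous_exp.comp (continuous_const.mul (Complex.continuous_ofReal.comp hfc))
  set H : ℝ → ℂ := fun x => ∫ t in e..x, ph t with hH
  have hHd : ∀ x, HasDerivAt H (ph x) x := by
    intro x
    exact integral_hasDerivAt_right (vc.intervalIntegrable e x)
      (vc.aestronglyMeasurable.stronglyMeasurableAtFilter) vc.continuousAt
  have hHc : Continuous H := continuous_iff_continuousAt.mpr fun x => (hHd x).continuousAt
  have Hb : ∀ x ∈ Icc q e, ‖H x‖ ≤ 3 / (lam * f1 x) := by
    intro x hx
    have hxe : Icc x e ⊆ Icc q e := Icc_subset_Icc hx.1 (le_refl e)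
    have h1' : ∀ y ∈ Icc x e, f1 x ≤ f1 y := by
      intro y hy
      have := f1_lower f1 f2 hf2 q e c h2 x hx y (hxe hy) hy.1
      nlinarith [hy.1]
    have h2' : ∀ y ∈ Icc x e, 0 ≤ f2 y := fun y hy => le_trans hc.le (h2 y (hxe hy))
    have := vdc1 f f1 f2 hf1 hf2 hf2c lam (f1 x) hl (f1pos x hx) x e hx.2 h1' h2'
    have hsymm : H x = -∫ t in x..e, ph t := by
      rw [hH]; simp [intervalIntegral.integral_symm x e]
    rw [hsymm, norm_neg]
    exact this
  -- integration by parts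
  have hud : ∀ x ∈ uIcc q e, HasDerivAt γ (γ' x) x := by rw [hIcc]; exact hγd
  have hγ'i : IntervalIntegrable γ' volume q e := by
    apply ContinuousOn.intervalIntegrable; rw [hIcc]; exact hγ'c
  have ibp := integral_mul_deriv_eq_deriv_mul hud (fun x _ => hHd x) hγ'i
    (vc.intervalIntegrable q e)
  have hHe : H e = 0 := by rw [hH]; simp
  rw [ibp, hHe, mul_zero, zero_sub]
  have hbd : ‖-(γ q * H q) - ∫ x in q..e, γ' x * H x‖
      ≤ ‖γ q * H q‖ + ‖∫ x in q..e, γ' x * H x‖ := by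
    refine le_trans (norm_sub_le _ _) ?_
    rw [norm_neg]
  refine le_trans hbd ?_
  -- boundary term
  have hbound : ‖γ q * H q‖ ≤ 3 * M / (lam * r) := by
    rw [norm_mul]
    have h1 : ‖H q‖ ≤ 3 / (lam * f1 q) := Hb q ⟨le_refl q, hqe⟩
    have h2' : 3 / (lam * f1 q) ≤ 3 / (lam * r) := by
      gcongr
    have := hM q ⟨le_refl q, hqe⟩
    calc ‖γ q‖ * ‖H q‖ ≤ M * (3 / (lam * r)) := by
          exact mul_le_mul this (le_trans h1 h2') (norm_nonneg _) hM0
      _ = 3 * M / (lam * r) := by ring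
  -- the integral term
  have hIcont : ContinuousOn (fun x => ‖γ' x‖ * ‖H x‖) (Icc q e) :=
    hγ'c.norm.mul (hHc.norm.continuousOn)
  have hnormint : ‖∫ x in q..e, γ' x * H x‖ ≤ ∫ x in q..e, ‖γ' x‖ * ‖H x‖ := by
    refine le_trans (norm_integral_le_integral_norm hqe) ?_
    refine le_of_eq (integral_congr fun x hx => ?_)
    rw [norm_mul]
  have hmain : (∫ x in q..e, ‖γ' x‖ * ‖H x‖) ≤ 3 * M / (lam * r) + 3 * M / (lam * c * δ) := by
    have hint : ∀ u v : ℝ, q ≤ u → u ≤ v → v ≤ e →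
        IntervalIntegrable (fun x => ‖γ' x‖ * ‖H x‖) volume u v := by
      intro u v h1 hu hv
      apply ContinuousOn.intervalIntegrable
      rw [uIcc_of_le hu]
      exact hIcont.mono (Icc_subset_Icc h1 hv)
    have hptH : ∀ x ∈ Icc q e, ‖H x‖ ≤ 3 / (lam * r) := by
      intro x hx
      refine le_trans (Hb x hx) ?_
      gcongr
      have := key x hx
      nlinarith [hx.1]
    rcases hpos with hA | hB
    · -- positive side : δ ≤ q
      have hq0 : 0 < q := lt_of_lt_of_le hδ hA
      obtain ⟨s0, hs0⟩ : ∃ s, s = min e (q + r / c) := ⟨_, rfl⟩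
      have hrc : 0 < r / c := div_pos hr hc
      have hqs0 : q ≤ s0 := by rw [hs0]; exact le_min hqe (by linarith)
      have hs0e : s0 ≤ e := by rw [hs0]; exact min_le_left _ _
      have hsplit := integral_add_adjacent_intervals (μ := volume)
        (hint q s0 (le_refl q) hqs0 hs0e) (hint s0 e (le_trans (le_refl q) hqs0) hs0e (le_refl e))
      rw [← hsplit]
      have hI1 : (∫ x in q..s0, ‖γ' x‖ * ‖H x‖) ≤ 3 * M / (lam * c * δ) := by
        have hC : ∀ x ∈ uIoc q s0, ‖‖γ' x‖ * ‖H x‖‖ ≤ (M / δ) * (3 / (lam * r)) := by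
          intro x hx
          rw [uIoc_of_le hqs0] at hx
          have hxm : x ∈ Icc q e := ⟨hx.1.le, le_trans hx.2 hs0e⟩
          have hx1 : q < x := hx.1
          have hx2' : x ≤ s0 := hx.2
          have hxpos : 0 < x := by linarith
          have hg1 : ‖γ' x‖ ≤ M / δ := by
            refine le_trans (h'M x hxm) ?_
            rw [abs_of_pos hxpos]
            gcongr
            linarith
          rw [Real.norm_eq_abs, abs_of_nonneg (mul_nonneg (norm_nonneg _) (norm_nonneg _))]
          exact mul_le_mul hg1 (hptH x hxm) (norm_nonneg _) (by positivity)
        have := norm_integral_le_of_norm_le_const hC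
        calc (∫ x in q..s0, ‖γ' x‖ * ‖H x‖) ≤ ‖∫ x in q..s0, ‖γ' x‖ * ‖H x‖‖ :=
              le_abs_self _
          _ ≤ (M / δ) * (3 / (lam * r)) * |s0 - q| := this
          _ ≤ (M / δ) * (3 / (lam * r)) * (r / c) := by
              have h1 : |s0 - q| = s0 - q := abs_of_nonneg (by linarith)
              have h2 : s0 - q ≤ r / c := by
                have := min_le_right e (q + r / c); rw [hs0]; linarith
              rw [h1]
              have : (0:ℝ) ≤ (M / δ) * (3 / (lam * r)) := by positivity
              exact mul_le_mul_of_nonneg_left h2 this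
          _ = 3 * M / (lam * c * δ) := by field_simp
      have hI2 : (∫ x in s0..e, ‖γ' x‖ * ‖H x‖) ≤ 3 * M / (lam * r) := by
        rcases eq_or_lt_of_le hs0e with heq | hlt
        · rw [heq]
          simp only [integral_same]
          positivity
        · have hs0v : s0 = q + r / c := by
            rcases le_total e (q + r / c) with h | h
            · exfalso; rw [hs0] at hlt; rw [min_eq_left h] at hlt; exact lt_irrefl e hlt
            · rw [hs0]; exact min_eq_right h
          obtain ⟨K, hK⟩ : ∃ k, k = 3 * M / (lam * c) := ⟨_, rfl⟩
          have hKpos : 0 ≤ K := by rw [hK]; positivity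
          have hne : ∀ x ∈ Icc s0 e, x - q ≠ 0 := by
            intro x hx
            have : r / c ≤ x - q := by rw [hs0v] at hx; linarith [hx.1]
            linarith
          have hgc : ContinuousOn (fun x => K * ((x - q) ^ 2)⁻¹) (Icc s0 e) := by
            refine continuousOn_const.mul (ContinuousOn.inv₀ ?_ ?_)
            · exact ((continuous_id.sub continuous_const).pow 2).continuousOn
            · intro x hx; exact pow_ne_zero 2 (hne x hx)
          have hgi : IntervalIntegrable (fun x => K * ((x - q) ^ 2)⁻¹) volume s0 e := by
            apply ContinuousOn.intervalIntegrable; rwa [uIcc_of_le hlt.le]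
          have hptw : ∀ x ∈ Icc s0 e, ‖γ' x‖ * ‖H x‖ ≤ K * ((x - q) ^ 2)⁻¹ := by
            intro x hx
            have hxm : x ∈ Icc q e := ⟨le_trans hqs0 hx.1, hx.2⟩
            have hxq : r / c ≤ x - q := by rw [hs0v] at hx; linarith [hx.1]
            have hxq0 : 0 < x - q := lt_of_lt_of_le hrc hxq
            have hxpos : 0 < x := by linarith
            have hg1 : ‖γ' x‖ ≤ M / (x - q) := by
              refine le_trans (h'M x hxm) ?_
              rw [abs_of_pos hxpos]
              gcongr
              linarith
            have hg2 : ‖H x‖ ≤ 3 / (lam * (c * (x - q))) := by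
              refine le_trans (Hb x hxm) ?_
              gcongr
              have := key x hxm
              linarith
            calc ‖γ' x‖ * ‖H x‖ ≤ (M / (x - q)) * (3 / (lam * (c * (x - q)))) :=
                  mul_le_mul hg1 hg2 (norm_nonneg _) (by positivity)
              _ = K * ((x - q) ^ 2)⁻¹ := by rw [hK]; field_simp
          have hmono := integral_mono_on hlt.le
            (hint s0 e (le_trans (le_refl q) hqs0) hs0e (le_refl e)) hgi hptw
          have hanti : ∀ x ∈ uIcc s0 e, HasDerivAt (fun y => -K * (y - q)⁻¹)
              (K * ((x - q) ^ 2)⁻¹) x := by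
            intro x hx
            rw [uIcc_of_le hlt.le] at hx
            have hd : HasDerivAt (fun y => y - q) 1 x := (hasDerivAt_id x).sub_const q
            have := (hd.inv (hne x hx)).const_mul (-K)
            refine this.congr_deriv ?_; symm
            ring
          have hval := integral_eq_sub_of_hasDerivAt hanti hgi
          rw [hval] at hmono
          refine le_trans hmono ?_
          have h1 : (s0 - q)⁻¹ = c / r := by
            have : s0 - q = r / c := by rw [hs0v]; ring
            rw [this, inv_div]
          have h2 : 0 ≤ (e - q)⁻¹ := by
            have : (0:ℝ) < e - q := by rw [hs0v] at hlt; linarith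
            positivity
          have : -K * (e - q)⁻¹ - -K * (s0 - q)⁻¹ = K * ((s0 - q)⁻¹ - (e - q)⁻¹) := by ring
          rw [this, h1]
          calc K * (c / r - (e - q)⁻¹) ≤ K * (c / r) := by
                refine mul_le_mul_of_nonneg_left (by linarith) hKpos
            _ = 3 * M / (lam * r) := by rw [hK]; field_simp
      linarith
    · -- negative side : e ≤ -δ
      have he0 : e < 0 := lt_of_le_of_lt hB (by linarith)
      have hq0 : q < 0 := lt_of_le_of_lt hqe he0
      obtain ⟨s1, hs1⟩ : ∃ s, s = min e (q / 2) := ⟨_, rfl⟩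
      have hqs1 : q ≤ s1 := by rw [hs1]; exact le_min hqe (by linarith)
      have hs1e : s1 ≤ e := by rw [hs1]; exact min_le_left _ _
      have hsplit := integral_add_adjacent_intervals (μ := volume)
        (hint q s1 (le_refl q) hqs1 hs1e) (hint s1 e (le_trans (le_refl q) hqs1) hs1e (le_refl e))
      rw [← hsplit]
      have hI1 : (∫ x in q..s1, ‖γ' x‖ * ‖H x‖) ≤ 3 * M / (lam * r) := by
        have hC : ∀ x ∈ uIoc q s1, ‖‖γ' x‖ * ‖H x‖‖ ≤ (M / (-q / 2)) * (3 / (lam * r)) := by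
          intro x hx
          rw [uIoc_of_le hqs1] at hx
          have hxm : x ∈ Icc q e := ⟨hx.1.le, le_trans hx.2 hs1e⟩
          have hx2 : x ≤ q / 2 := by
            have h := hx.2
            rw [hs1] at h
            exact le_trans h (min_le_right _ _)
          have hxneg : x < 0 := by linarith
          have hg1 : ‖γ' x‖ ≤ M / (-q / 2) := by
            refine le_trans (h'M x hxm) ?_
            rw [abs_of_neg hxneg]
            have hmq : (0:ℝ) < -q / 2 := by linarith
            have hle : -q / 2 ≤ -x := by linarith
            exact div_le_div_of_nonneg_left hM0 hmq hle
          rw [Real.norm_eq_abs, abs_of_nonneg (mul_nonneg (norm_nonneg _) (norm_nonneg _))]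
          refine mul_le_mul hg1 (hptH x hxm) (norm_nonneg _)
            (div_nonneg hM0 (by linarith : (0:ℝ) ≤ -q / 2))
        have := norm_integral_le_of_norm_le_const hC
        calc (∫ x in q..s1, ‖γ' x‖ * ‖H x‖) ≤ ‖∫ x in q..s1, ‖γ' x‖ * ‖H x‖‖ :=
              le_abs_self _
          _ ≤ (M / (-q / 2)) * (3 / (lam * r)) * |s1 - q| := this
          _ ≤ (M / (-q / 2)) * (3 / (lam * r)) * (-q / 2) := by
              have h1 : |s1 - q| = s1 - q := abs_of_nonneg (by linarith)
              have h2 : s1 - q ≤ -q / 2 := by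
                have := min_le_right e (q / 2); rw [hs1]; linarith
              rw [h1]
              have h3 : (0:ℝ) ≤ (M / (-q / 2)) * (3 / (lam * r)) :=
                mul_nonneg (div_nonneg hM0 (by linarith)) (by positivity)
              exact mul_le_mul_of_nonneg_left h2 h3
          _ = 3 * M / (lam * r) := by
              have hqne : q ≠ 0 := ne_of_lt hq0
              field_simp
      have hI2 : (∫ x in s1..e, ‖γ' x‖ * ‖H x‖) ≤ 3 * M / (lam * c * δ) := by
        rcases eq_or_lt_of_le hs1e with heq | hlt
        · rw [heq]
          simp only [integral_same]
          positivity
        · have hs1v : s1 = q / 2 := by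
            rcases le_total e (q / 2) with h | h
            · exfalso; rw [hs1] at hlt; rw [min_eq_left h] at hlt; exact lt_irrefl e hlt
            · rw [hs1]; exact min_eq_right h
          obtain ⟨K, hK⟩ : ∃ k, k = 3 * M / (lam * c) := ⟨_, rfl⟩
          have hKpos : 0 ≤ K := by rw [hK]; positivity
          have hne : ∀ x ∈ Icc s1 e, x ≠ 0 := by
            intro x hx
            have : x ≤ e := hx.2
            have : x < 0 := lt_of_le_of_lt this he0
            exact this.ne
          have hgc : ContinuousOn (fun x => K * (x ^ 2)⁻¹) (Icc s1 e) := by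
            refine continuousOn_const.mul (ContinuousOn.inv₀ ?_ ?_)
            · exact (continuous_id.pow 2).continuousOn
            · intro x hx; exact pow_ne_zero 2 (hne x hx)
          have hgi : IntervalIntegrable (fun x => K * (x ^ 2)⁻¹) volume s1 e := by
            apply ContinuousOn.intervalIntegrable; rwa [uIcc_of_le hlt.le]
          have hptw : ∀ x ∈ Icc s1 e, ‖γ' x‖ * ‖H x‖ ≤ K * (x ^ 2)⁻¹ := by
            intro x hx
            have hxm : x ∈ Icc q e := ⟨le_trans hqs1 hx.1, hx.2⟩
            have hxneg : x < 0 := lt_of_le_of_lt hx.2 he0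
            have hx2 : q / 2 ≤ x := by rw [hs1v] at hx; exact hx.1
            have hxq : -x ≤ x - q := by linarith
            have hxq0 : 0 < x - q := by linarith
            have hg1 : ‖γ' x‖ ≤ M / (-x) := by
              refine le_trans (h'M x hxm) ?_
              rw [abs_of_neg hxneg]
            have hg2 : ‖H x‖ ≤ 3 / (lam * (c * (-x))) := by
              refine le_trans (Hb x hxm) ?_
              have hpos2 : (0:ℝ) < lam * (c * (-x)) := by
                have : (0:ℝ) < -x := by linarith
                positivity
              have hle2 : lam * (c * (-x)) ≤ lam * f1 x := by
                have := key x hxm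
                have h3 : c * (-x) ≤ f1 x := by nlinarith
                exact mul_le_mul_of_nonneg_left h3 hl.le
              exact div_le_div_of_nonneg_left (by norm_num) hpos2 hle2
            calc ‖γ' x‖ * ‖H x‖ ≤ (M / (-x)) * (3 / (lam * (c * (-x)))) :=
                  mul_le_mul hg1 hg2 (norm_nonneg _)
                    (div_nonneg hM0 (by linarith : (0:ℝ) ≤ -x))
              _ = K * (x ^ 2)⁻¹ := by
                  rw [hK]
                  have hxne : x ≠ 0 := hxneg.ne
                  field_simp
          have hmono := integral_mono_on hlt.le
            (hint s1 e (le_trans (le_refl q) hqs1) hs1e (le_refl e)) hgi hptw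
          have hanti : ∀ x ∈ uIcc s1 e, HasDerivAt (fun y => -K * y⁻¹)
              (K * (x ^ 2)⁻¹) x := by
            intro x hx
            rw [uIcc_of_le hlt.le] at hx
            have := ((hasDerivAt_id x).inv (hne x hx)).const_mul (-K)
            refine this.congr_deriv ?_; symm
            simp only [id_eq]; ring
          have hval := integral_eq_sub_of_hasDerivAt hanti hgi
          rw [hval] at hmono
          refine le_trans hmono ?_
          have hs1neg : s1 < 0 := lt_of_le_of_lt hs1e he0
          have h1 : s1⁻¹ ≤ 0 := by
            exact inv_nonpos.mpr hs1neg.le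
          have h2 : (-e)⁻¹ ≤ δ⁻¹ := by
            have hde : δ ≤ -e := by linarith
            exact inv_anti₀ hδ hde
          have heinv : -K * e⁻¹ - -K * s1⁻¹ = K * (-e)⁻¹ + K * s1⁻¹ := by
            rw [inv_neg]
            ring
          rw [heinv]
          calc K * (-e)⁻¹ + K * s1⁻¹ ≤ K * δ⁻¹ + 0 := by
                refine add_le_add (mul_le_mul_of_nonneg_left h2 hKpos) ?_
                exact mul_nonpos_of_nonneg_of_nonpos hKpos h1
            _ = 3 * M / (lam * c * δ) := by rw [hK]; field_simp; ring
      linarith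
  calc ‖γ q * H q‖ + ‖∫ x in q..e, γ' x * H x‖
      ≤ 3 * M / (lam * r) + (3 * M / (lam * r) + 3 * M / (lam * c * δ)) := by
        exact add_le_add hbound (le_trans hnormint hmain)
    _ = 6 * M / (lam * r) + 3 * M / (lam * c * δ) := by ring


set_option maxHeartbeats 1000000 in
lemma half (f f1 f2 : ℝ → ℝ)
    (hf1 : ∀ x, HasDerivAt f (f1 x) x)
    (hf2 : ∀ x, HasDerivAt f1 (f2 x) x)
    (hf2c : Continuous f2)
    (γ γ' : ℝ → ℂ) (lam r c M δ q b : ℝ)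
    (hl : 0 < lam) (hr : 0 < r) (hc : 0 < c) (hδ : 0 < δ)
    (hqb : q ≤ b)
    (hγc : ContinuousOn γ (Icc q b))
    (hγd : ∀ x ∈ Icc q b, x ≠ 0 → HasDerivAt γ (γ' x) x)
    (hγ'c : ContinuousOn γ' (Icc q b \ {0}))
    (hM : ∀ x ∈ Icc q b, ‖γ x‖ ≤ M)
    (h'M : ∀ x ∈ Icc q b, x ≠ 0 → ‖γ' x‖ ≤ M / |x|)
    (hq : r ≤ f1 q)
    (h2 : ∀ x ∈ Icc q b, c ≤ f2 x) :
    ‖∫ x in q..b, γ x * Complex.exp (Complex.I * lam * f x)‖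
      ≤ 2 * M * δ + 2 * (6 * M / (lam * r) + 3 * M / (lam * c * δ)) := by
  have hM0 : 0 ≤ M := le_trans (norm_nonneg _) (hM q ⟨le_refl q, hqb⟩)
  have hS0 : 0 ≤ 6 * M / (lam * r) + 3 * M / (lam * c * δ) := by positivity
  obtain ⟨m1, hm1⟩ : ∃ m, m = max q (min b (-δ)) := ⟨_, rfl⟩
  obtain ⟨m2, hm2⟩ : ∃ m, m = max m1 (min b δ) := ⟨_, rfl⟩
  have hqm1 : q ≤ m1 := by rw [hm1]; exact le_max_left _ _
  have hm1b : m1 ≤ b := by rw [hm1]; exact max_le hqb (min_le_left _ _)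
  have hm1m2 : m1 ≤ m2 := by rw [hm2]; exact le_max_left _ _
  have hm2b : m2 ≤ b := by rw [hm2]; exact max_le hm1b (min_le_left _ _)
  have hfc : Continuous f := continuous_iff_continuousAt.mpr fun x => (hf1 x).continuousAt
  have vc : Continuous (fun x => Complex.exp (Complex.I * lam * f x)) :=
    Complex.continuous_exp.comp (continuous_const.mul (Complex.continuous_ofReal.comp hfc))
  have hFc : ContinuousOn (fun x => γ x * Complex.exp (Complex.I * lam * f x)) (Icc q b) :=
    hγc.mul vc.continuousOn
  have hFi : ∀ u v : ℝ, q ≤ u → u ≤ v → v ≤ b →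
      IntervalIntegrable (fun x => γ x * Complex.exp (Complex.I * lam * f x)) volume u v := by
    intro u v h1 hu hv
    apply ContinuousOn.intervalIntegrable
    rw [uIcc_of_le hu]
    exact hFc.mono (Icc_subset_Icc h1 hv)
  have hsplit1 := integral_add_adjacent_intervals (μ := volume)
    (hFi q m1 (le_refl q) hqm1 (le_trans hm1m2 hm2b))
    (hFi m1 b hqm1 (le_trans hm1m2 hm2b) (le_refl b))
  have hsplit2 := integral_add_adjacent_intervals (μ := volume)
    (hFi m1 m2 hqm1 hm1m2 hm2b) (hFi m2 b (le_trans hqm1 hm1m2) hm2b (le_refl b))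
  rw [← hsplit1, ← hsplit2]
  -- piece 1
  have hP1 : ‖∫ x in q..m1, γ x * Complex.exp (Complex.I * lam * f x)‖
      ≤ 6 * M / (lam * r) + 3 * M / (lam * c * δ) := by
    rcases eq_or_lt_of_le hqm1 with heq | hlt
    · rw [← heq]; simp [hS0]
    · have hm1v : m1 = min b (-δ) := by
        rcases le_total (min b (-δ)) q with h | h
        · exfalso; rw [hm1] at hlt; rw [max_eq_left h] at hlt; exact lt_irrefl q hlt
        · rw [hm1]; exact max_eq_right h
      have hm1δ : m1 ≤ -δ := by rw [hm1v]; exact min_le_right _ _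
      have hsub : Icc q m1 ⊆ Icc q b := Icc_subset_Icc (le_refl q) hm1b
      have hne : ∀ x ∈ Icc q m1, x ≠ 0 := by
        intro x hx
        have : x ≤ -δ := le_trans hx.2 hm1δ
        have : x < 0 := by linarith
        exact this.ne
      refine side f f1 f2 hf1 hf2 hf2c γ γ' lam r c M δ q m1 hl hr hc hδ hqm1
        (Or.inr hm1δ) (fun x hx => hγd x (hsub hx) (hne x hx))
        (hγ'c.mono fun x hx => ⟨hsub hx, hne x hx⟩)
        (fun x hx => hM x (hsub hx)) (fun x hx => h'M x (hsub hx) (hne x hx)) hq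
        (fun x hx => h2 x (hsub hx))
  -- piece 2
  have hP2 : ‖∫ x in m1..m2, γ x * Complex.exp (Complex.I * lam * f x)‖ ≤ 2 * M * δ := by
    have hC : ∀ x ∈ uIoc m1 m2, ‖γ x * Complex.exp (Complex.I * lam * f x)‖ ≤ M := by
      intro x hx
      rw [uIoc_of_le hm1m2] at hx
      have hxm : x ∈ Icc q b := ⟨le_trans hqm1 hx.1.le, le_trans hx.2 hm2b⟩
      rw [norm_mul]
      have h1 : ‖Complex.exp (Complex.I * lam * f x)‖ = 1 := by
        rw [Complex.norm_exp]
        simp [Complex.mul_re]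
      rw [h1, mul_one]
      exact hM x hxm
    have := norm_integral_le_of_norm_le_const hC
    have hlen : |m2 - m1| ≤ 2 * δ := by
      have h1 : m2 ≤ m1 + 2 * δ := by
        rw [hm2]
        refine max_le (by linarith) ?_
        rcases le_total (-δ) b with h | h
        · have : -δ ≤ m1 := by rw [hm1]; exact le_max_of_le_right (le_min h (le_refl _))
          have : min b δ ≤ δ := min_le_right _ _
          linarith
        · have hm1v : m1 = b := by
            rw [hm1]
            have : min b (-δ) = b := min_eq_left h
            rw [this]; exact max_eq_right hqb
          have : min b δ ≤ b := min_le_left _ _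
          rw [hm1v]; linarith
      rw [abs_of_nonneg (by linarith)]
      linarith
    calc ‖∫ x in m1..m2, γ x * Complex.exp (Complex.I * lam * f x)‖ ≤ M * |m2 - m1| := this
      _ ≤ M * (2 * δ) := mul_le_mul_of_nonneg_left hlen hM0
      _ = 2 * M * δ := by ring
  -- piece 3
  have hP3 : ‖∫ x in m2..b, γ x * Complex.exp (Complex.I * lam * f x)‖
      ≤ 6 * M / (lam * r) + 3 * M / (lam * c * δ) := by
    rcases eq_or_lt_of_le hm2b with heq | hlt
    · rw [heq]; simp [hS0]
    · have hδm2 : δ ≤ m2 := by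
        rcases le_total b δ with h | h
        · exfalso
          have : min b δ = b := min_eq_left h
          have : b ≤ m2 := by rw [hm2, this]; exact le_max_right _ _
          linarith
        · have : min b δ = δ := min_eq_right h
          rw [hm2, this]; exact le_max_right _ _
      have hm2m : m2 ∈ Icc q b := ⟨le_trans hqm1 hm1m2, hm2b⟩
      have hqm2 : r ≤ f1 m2 := by
        have := f1_lower f1 f2 hf2 q b c h2 q ⟨le_refl q, hqb⟩ m2 hm2m hm2m.1
        nlinarith [hm2m.1]
      have hsub : Icc m2 b ⊆ Icc q b := Icc_subset_Icc hm2m.1 (le_refl b)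
      have hne : ∀ x ∈ Icc m2 b, x ≠ 0 := by
        intro x hx
        have : δ ≤ x := le_trans hδm2 hx.1
        have : 0 < x := by linarith
        exact this.ne'
      refine side f f1 f2 hf1 hf2 hf2c γ γ' lam r c M δ m2 b hl hr hc hδ hm2b
        (Or.inl hδm2) (fun x hx => hγd x (hsub hx) (hne x hx))
        (hγ'c.mono fun x hx => ⟨hsub hx, hne x hx⟩)
        (fun x hx => hM x (hsub hx)) (fun x hx => h'M x (hsub hx) (hne x hx)) hqm2
        (fun x hx => h2 x (hsub hx))
  calc ‖(∫ x in q..m1, γ x * Complex.exp (Complex.I * lam * f x)) +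
        ((∫ x in m1..m2, γ x * Complex.exp (Complex.I * lam * f x)) +
          ∫ x in m2..b, γ x * Complex.exp (Complex.I * lam * f x))‖
      ≤ ‖∫ x in q..m1, γ x * Complex.exp (Complex.I * lam * f x)‖ +
        (‖∫ x in m1..m2, γ x * Complex.exp (Complex.I * lam * f x)‖ +
          ‖∫ x in m2..b, γ x * Complex.exp (Complex.I * lam * f x)‖) := by
        refine le_trans (norm_add_le _ _) ?_
        gcongr
        exact norm_add_le _ _
    _ ≤ 2 * M * δ + 2 * (6 * M / (lam * r) + 3 * M / (lam * c * δ)) := by linarith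


lemma neg_mem_Icc' {a p y : ℝ} (hy : y ∈ Icc (-p) (-a)) : -y ∈ Icc a p := by
  constructor <;> [linarith [hy.2]; linarith [hy.1]]

set_option maxHeartbeats 1000000 in
lemma half_left (f f1 f2 : ℝ → ℝ)
    (hf1 : ∀ x, HasDerivAt f (f1 x) x)
    (hf2 : ∀ x, HasDerivAt f1 (f2 x) x)
    (hf2c : Continuous f2)
    (γ γ' : ℝ → ℂ) (lam r c M δ a p : ℝ)
    (hl : 0 < lam) (hr : 0 < r) (hc : 0 < c) (hδ : 0 < δ)
    (hap : a ≤ p)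
    (hγc : ContinuousOn γ (Icc a p))
    (hγd : ∀ x ∈ Icc a p, x ≠ 0 → HasDerivAt γ (γ' x) x)
    (hγ'c : ContinuousOn γ' (Icc a p \ {0}))
    (hM : ∀ x ∈ Icc a p, ‖γ x‖ ≤ M)
    (h'M : ∀ x ∈ Icc a p, x ≠ 0 → ‖γ' x‖ ≤ M / |x|)
    (hp : f1 p ≤ -r)
    (h2 : ∀ x ∈ Icc a p, c ≤ f2 x) :
    ‖∫ x in a..p, γ x * Complex.exp (Complex.I * lam * f x)‖
      ≤ 2 * M * δ + 2 * (6 * M / (lam * r) + 3 * M / (lam * c * δ)) := by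
  have hkey : (∫ x in a..p, γ x * Complex.exp (Complex.I * lam * f x))
      = ∫ y in -p..(-a), γ (-y) * Complex.exp (Complex.I * lam * f (-y)) := by
    rw [intervalIntegral.integral_comp_neg
      (fun x => γ x * Complex.exp (Complex.I * lam * f x))]
    norm_num
  rw [hkey]
  have hg1 : ∀ y, HasDerivAt (fun y => f (-y)) (-f1 (-y)) y := by
    intro y
    have := HasDerivAt.comp y (hf1 (-y)) (hasDerivAt_neg y)
    exact this.congr_deriv (by ring)
  have hg2 : ∀ y, HasDerivAt (fun y => -f1 (-y)) (f2 (-y)) y := by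
    intro y
    have := (HasDerivAt.comp y (hf2 (-y)) (hasDerivAt_neg y)).neg
    exact this.congr_deriv (by ring)
  have hg2c : Continuous (fun y => f2 (-y)) := hf2c.comp continuous_neg
  have hηd : ∀ y ∈ Icc (-p) (-a), y ≠ 0 →
      HasDerivAt (fun y => γ (-y)) (-γ' (-y)) y := by
    intro y hy hy0
    have hmem := neg_mem_Icc' hy
    have hne : (-y : ℝ) ≠ 0 := neg_ne_zero.mpr hy0
    have := HasDerivAt.scomp y (hγd (-y) hmem hne) (hasDerivAt_neg y)
    exact this.congr_deriv (by simp)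
  have hη'c : ContinuousOn (fun y => -γ' (-y)) (Icc (-p) (-a) \ {0}) := by
    refine (ContinuousOn.comp hγ'c (continuous_neg.continuousOn) ?_).neg
    intro y hy
    exact ⟨neg_mem_Icc' hy.1, neg_ne_zero.mpr hy.2⟩
  have := half (fun y => f (-y)) (fun y => -f1 (-y)) (fun y => f2 (-y)) hg1 hg2 hg2c
    (fun y => γ (-y)) (fun y => -γ' (-y)) lam r c M δ (-p) (-a)
    hl hr hc hδ (by linarith)
    (hγc.comp continuous_neg.continuousOn fun y hy => neg_mem_Icc' hy)
    hηd hη'c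
    (fun y hy => hM (-y) (neg_mem_Icc' hy))
    (fun y hy hy0 => by
      rw [norm_neg]
      have := h'M (-y) (neg_mem_Icc' hy) (neg_ne_zero.mpr hy0)
      simpa [abs_neg] using this)
    (by simpa using (by linarith : r ≤ -f1 p))
    (fun y hy => h2 (-y) (neg_mem_Icc' hy))
  exact this


set_option maxHeartbeats 1000000 in
lemma interval_pos (f f1 f2 : ℝ → ℝ)
    (hf1 : ∀ x, HasDerivAt f (f1 x) x)
    (hf2 : ∀ x, HasDerivAt f1 (f2 x) x)
    (hf2c : Continuous f2)
    (γ γ' : ℝ → ℂ) (lam r c M δ a b : ℝ)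
    (hl : 0 < lam) (hr : 0 < r) (hc : 0 < c) (hδ : 0 < δ)
    (hab : a ≤ b)
    (hγc : ContinuousOn γ (Icc a b))
    (hγd : ∀ x ∈ Icc a b, x ≠ 0 → HasDerivAt γ (γ' x) x)
    (hγ'c : ContinuousOn γ' (Icc a b \ {0}))
    (hM : ∀ x ∈ Icc a b, ‖γ x‖ ≤ M)
    (h'M : ∀ x ∈ Icc a b, x ≠ 0 → ‖γ' x‖ ≤ M / |x|)
    (h2 : ∀ x ∈ Icc a b, c ≤ f2 x) :
    ‖∫ x in a..b, γ x * Complex.exp (Complex.I * lam * f x)‖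
      ≤ 2 * (2 * M * δ + 2 * (6 * M / (lam * r) + 3 * M / (lam * c * δ))) + 2 * M * r / c := by
  classical
  have hM0 : 0 ≤ M := le_trans (norm_nonneg _) (hM a ⟨le_refl a, hab⟩)
  have hB0 : 0 ≤ 2 * M * δ + 2 * (6 * M / (lam * r) + 3 * M / (lam * c * δ)) := by positivity
  have hf1c : Continuous f1 := continuous_iff_continuousAt.mpr fun x => (hf2 x).continuousAt
  have keylem := f1_lower f1 f2 hf2 a b c h2
  obtain ⟨S, hS⟩ : ∃ s : Set ℝ, s = {x ∈ Icc a b | r ≤ f1 x} := ⟨_, rfl⟩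
  obtain ⟨T, hT⟩ : ∃ s : Set ℝ, s = {x ∈ Icc a b | f1 x ≤ -r} := ⟨_, rfl⟩
  have hSclosed : IsClosed S := by
    rw [hS]
    exact isClosed_Icc.inter (isClosed_Ici.preimage hf1c)
  have hTclosed : IsClosed T := by
    rw [hT]
    exact isClosed_Icc.inter (isClosed_Iic.preimage hf1c)
  have hSbdd : BddBelow S := ⟨a, fun x hx => by rw [hS] at hx; exact hx.1.1⟩
  have hTbdd : BddAbove T := ⟨b, fun x hx => by rw [hT] at hx; exact hx.1.2⟩
  have hSmem : ∀ x, x ∈ S ↔ (x ∈ Icc a b ∧ r ≤ f1 x) := fun x => by rw [hS]; exact Iff.rfl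
  have hTmem : ∀ x, x ∈ T ↔ (x ∈ Icc a b ∧ f1 x ≤ -r) := fun x => by rw [hT]; exact Iff.rfl
  obtain ⟨q, hq⟩ : ∃ q, q = if h : S.Nonempty then sInf S else b := ⟨_, rfl⟩
  obtain ⟨p, hp⟩ : ∃ p, p = if h : T.Nonempty then sSup T else a := ⟨_, rfl⟩
  have hqIcc : q ∈ Icc a b := by
    rw [hq]
    split_ifs with h
    · exact ((hSmem _).mp (hSclosed.csInf_mem h hSbdd)).1
    · exact ⟨hab, le_refl b⟩
  have hpIcc : p ∈ Icc a b := by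
    rw [hp]
    split_ifs with h
    · exact ((hTmem _).mp (hTclosed.csSup_mem h hTbdd)).1
    · exact ⟨le_refl a, hab⟩
  have hqS : S.Nonempty → r ≤ f1 q := by
    intro h
    rw [hq, dif_pos h]
    exact ((hSmem _).mp (hSclosed.csInf_mem h hSbdd)).2
  have hpT : T.Nonempty → f1 p ≤ -r := by
    intro h
    rw [hp, dif_pos h]
    exact ((hTmem _).mp (hTclosed.csSup_mem h hTbdd)).2
  have hpq : p ≤ q := by
    by_cases h1 : T.Nonempty
    · by_cases h2' : S.Nonempty
      · by_contra hcon
        push_neg at hcon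
        have hpv : f1 p ≤ -r := hpT h1
        have hqv : r ≤ f1 q := hqS h2'
        have := keylem q hqIcc p hpIcc hcon.le
        nlinarith [mul_nonneg hc.le (sub_nonneg.mpr hcon.le)]
      · have hqb' : q = b := by rw [hq, dif_neg h2']
        rw [hqb']; exact hpIcc.2
    · have hpa : p = a := by rw [hp, dif_neg h1]
      rw [hpa]; exact hqIcc.1
  have hqlt : q < b → r ≤ f1 q := by
    intro hlt
    by_cases h : S.Nonempty
    · exact hqS h
    · exfalso; rw [hq, dif_neg h] at hlt; exact lt_irrefl b hlt
  have hplt : a < p → f1 p ≤ -r := by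
    intro hlt
    by_cases h : T.Nonempty
    · exact hpT h
    · exfalso; rw [hp, dif_neg h] at hlt; exact lt_irrefl a hlt
  have hgt : ∀ x ∈ Icc a b, p < x → -r < f1 x := by
    intro x hx hpx
    by_contra hcon
    push_neg at hcon
    have hxT : x ∈ T := (hTmem _).mpr ⟨hx, hcon⟩
    have hTne : T.Nonempty := ⟨x, hxT⟩
    have : x ≤ p := by rw [hp, dif_pos hTne]; exact le_csSup hTbdd hxT
    linarith
  have hlt' : ∀ x ∈ Icc a b, x < q → f1 x < r := by
    intro x hx hxq
    by_contra hcon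
    push_neg at hcon
    have hxS : x ∈ S := (hSmem _).mpr ⟨hx, hcon⟩
    have hSne : S.Nonempty := ⟨x, hxS⟩
    have : q ≤ x := by rw [hq, dif_pos hSne]; exact csInf_le hSbdd hxS
    linarith
  have hlen : q - p ≤ 2 * r / c := by
    refine le_of_forall_pos_le_add ?_
    intro ε hε
    rcases le_total (q - p) ε with h | h
    · have : (0:ℝ) ≤ 2 * r / c := by positivity
      linarith
    · have hx : p + ε / 2 ∈ Icc a b := ⟨by linarith [hpIcc.1], by linarith [hqIcc.2]⟩
      have hy : q - ε / 2 ∈ Icc a b := ⟨by linarith [hpIcc.1], by linarith [hqIcc.2]⟩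
      have hx1 : -r < f1 (p + ε / 2) := hgt _ hx (by linarith)
      have hy1 : f1 (q - ε / 2) < r := hlt' _ hy (by linarith)
      have hk := keylem _ hx _ hy (by linarith)
      have hcc : c * (q - p - ε) < 2 * r := by nlinarith
      have : q - p - ε ≤ 2 * r / c := (le_div_iff₀ hc).mpr (by nlinarith)
      linarith
  -- split the integral
  have hfc : Continuous f := continuous_iff_continuousAt.mpr fun x => (hf1 x).continuousAt
  have vc : Continuous (fun x => Complex.exp (Complex.I * lam * f x)) :=
    Complex.continuous_exp.comp (continuous_const.mul (Complex.continuous_ofReal.comp hfc))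
  have hFc : ContinuousOn (fun x => γ x * Complex.exp (Complex.I * lam * f x)) (Icc a b) :=
    hγc.mul vc.continuousOn
  have hFi : ∀ u v : ℝ, a ≤ u → u ≤ v → v ≤ b →
      IntervalIntegrable (fun x => γ x * Complex.exp (Complex.I * lam * f x)) volume u v := by
    intro u v h1 hu hv
    apply ContinuousOn.intervalIntegrable
    rw [uIcc_of_le hu]
    exact hFc.mono (Icc_subset_Icc h1 hv)
  have hsplit1 := integral_add_adjacent_intervals (μ := volume)
    (hFi a p (le_refl a) hpIcc.1 hpIcc.2) (hFi p b hpIcc.1 hpIcc.2 (le_refl b))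
  have hsplit2 := integral_add_adjacent_intervals (μ := volume)
    (hFi p q hpIcc.1 hpq hqIcc.2) (hFi q b (le_trans hpIcc.1 hpq) hqIcc.2 (le_refl b))
  rw [← hsplit1, ← hsplit2]
  -- piece bounds
  have hP1 : ‖∫ x in a..p, γ x * Complex.exp (Complex.I * lam * f x)‖
      ≤ 2 * M * δ + 2 * (6 * M / (lam * r) + 3 * M / (lam * c * δ)) := by
    rcases eq_or_lt_of_le hpIcc.1 with heq | hlt
    · rw [← heq]; simpa using hB0
    · have hsub : Icc a p ⊆ Icc a b := Icc_subset_Icc (le_refl a) hpIcc.2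
      exact half_left f f1 f2 hf1 hf2 hf2c γ γ' lam r c M δ a p hl hr hc hδ hpIcc.1
        (hγc.mono hsub) (fun x hx hx0 => hγd x (hsub hx) hx0)
        (hγ'c.mono fun x hx => ⟨hsub hx.1, hx.2⟩)
        (fun x hx => hM x (hsub hx)) (fun x hx hx0 => h'M x (hsub hx) hx0)
        (hplt hlt) (fun x hx => h2 x (hsub hx))
  have hP2 : ‖∫ x in p..q, γ x * Complex.exp (Complex.I * lam * f x)‖ ≤ 2 * M * r / c := by
    have hC : ∀ x ∈ uIoc p q, ‖γ x * Complex.exp (Complex.I * lam * f x)‖ ≤ M := by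
      intro x hx
      rw [uIoc_of_le hpq] at hx
      have hxm : x ∈ Icc a b := ⟨le_trans hpIcc.1 hx.1.le, le_trans hx.2 hqIcc.2⟩
      rw [norm_mul]
      have h1 : ‖Complex.exp (Complex.I * lam * f x)‖ = 1 := by
        rw [Complex.norm_exp]
        simp [Complex.mul_re]
      rw [h1, mul_one]
      exact hM x hxm
    have h0 := norm_integral_le_of_norm_le_const hC
    calc ‖∫ x in p..q, γ x * Complex.exp (Complex.I * lam * f x)‖ ≤ M * |q - p| := h0
      _ ≤ M * (2 * r / c) := by
          refine mul_le_mul_of_nonneg_left ?_ hM0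
          rw [abs_of_nonneg (by linarith)]
          exact hlen
      _ = 2 * M * r / c := by ring
  have hP3 : ‖∫ x in q..b, γ x * Complex.exp (Complex.I * lam * f x)‖
      ≤ 2 * M * δ + 2 * (6 * M / (lam * r) + 3 * M / (lam * c * δ)) := by
    rcases eq_or_lt_of_le hqIcc.2 with heq | hlt
    · rw [heq]; simpa using hB0
    · have hsub : Icc q b ⊆ Icc a b := Icc_subset_Icc hqIcc.1 (le_refl b)
      exact half f f1 f2 hf1 hf2 hf2c γ γ' lam r c M δ q b hl hr hc hδ hqIcc.2
        (hγc.mono hsub) (fun x hx hx0 => hγd x (hsub hx) hx0)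
        (hγ'c.mono fun x hx => ⟨hsub hx.1, hx.2⟩)
        (fun x hx => hM x (hsub hx)) (fun x hx hx0 => h'M x (hsub hx) hx0)
        (hqlt hlt) (fun x hx => h2 x (hsub hx))
  calc ‖(∫ x in a..p, γ x * Complex.exp (Complex.I * lam * f x)) +
        ((∫ x in p..q, γ x * Complex.exp (Complex.I * lam * f x)) +
          ∫ x in q..b, γ x * Complex.exp (Complex.I * lam * f x))‖
      ≤ ‖∫ x in a..p, γ x * Complex.exp (Complex.I * lam * f x)‖ +
        (‖∫ x in p..q, γ x * Complex.exp (Complex.I * lam * f x)‖ +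
          ‖∫ x in q..b, γ x * Complex.exp (Complex.I * lam * f x)‖) := by
        refine le_trans (norm_add_le _ _) ?_
        gcongr
        exact norm_add_le _ _
    _ ≤ 2 * (2 * M * δ + 2 * (6 * M / (lam * r) + 3 * M / (lam * c * δ))) + 2 * M * r / c := by
        linarith


lemma intervalIntegral_conj {F : ℝ → ℂ} {a b : ℝ} :
    ∫ x in a..b, (starRingEnd ℂ) (F x) = (starRingEnd ℂ) (∫ x in a..b, F x) := by
  rw [intervalIntegral, intervalIntegral, integral_conj, integral_conj, ← map_sub]

lemma interval_neg (f f1 f2 : ℝ → ℝ)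
    (hf1 : ∀ x, HasDerivAt f (f1 x) x)
    (hf2 : ∀ x, HasDerivAt f1 (f2 x) x)
    (hf2c : Continuous f2)
    (γ γ' : ℝ → ℂ) (lam r c M δ a b : ℝ)
    (hl : 0 < lam) (hr : 0 < r) (hc : 0 < c) (hδ : 0 < δ)
    (hab : a ≤ b)
    (hγc : ContinuousOn γ (Icc a b))
    (hγd : ∀ x ∈ Icc a b, x ≠ 0 → HasDerivAt γ (γ' x) x)
    (hγ'c : ContinuousOn γ' (Icc a b \ {0}))
    (hM : ∀ x ∈ Icc a b, ‖γ x‖ ≤ M)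
    (h'M : ∀ x ∈ Icc a b, x ≠ 0 → ‖γ' x‖ ≤ M / |x|)
    (h2 : ∀ x ∈ Icc a b, f2 x ≤ -c) :
    ‖∫ x in a..b, γ x * Complex.exp (Complex.I * lam * f x)‖
      ≤ 2 * (2 * M * δ + 2 * (6 * M / (lam * r) + 3 * M / (lam * c * δ))) + 2 * M * r / c := by
  have hEq : ∀ x : ℝ, (starRingEnd ℂ) (γ x * Complex.exp (Complex.I * lam * f x))
      = (starRingEnd ℂ) (γ x) * Complex.exp (Complex.I * lam * ((-f) x)) := by
    intro x
    rw [map_mul, ← Complex.exp_conj]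
    congr 2
    simp only [map_mul, Complex.conj_I, Complex.conj_ofReal, Pi.neg_apply]
    push_cast
    ring
  have h1 : ‖∫ x in a..b, γ x * Complex.exp (Complex.I * lam * f x)‖
      = ‖∫ x in a..b, (starRingEnd ℂ) (γ x) * Complex.exp (Complex.I * lam * ((-f) x))‖ := by
    have e1 : (∫ x in a..b, (starRingEnd ℂ) (γ x) * Complex.exp (Complex.I * lam * ((-f) x)))
        = ∫ x in a..b, (starRingEnd ℂ) (γ x * Complex.exp (Complex.I * lam * f x)) :=
      intervalIntegral.integral_congr fun x _ => (hEq x).symm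
    rw [e1, intervalIntegral_conj, RCLike.norm_conj]
  rw [h1]
  refine interval_pos (-f) (-f1) (-f2) (fun x => (hf1 x).neg) (fun x => (hf2 x).neg)
    hf2c.neg (fun x => (starRingEnd ℂ) (γ x)) (fun x => (starRingEnd ℂ) (γ' x))
    lam r c M δ a b hl hr hc hδ hab ?_ ?_ ?_ ?_ ?_ ?_
  · exact Complex.continuous_conj.comp_continuousOn hγc
  · intro x hx hx0
    have := (Complex.conjCLE.toContinuousLinearMap.hasFDerivAt).comp_hasDerivAt x
      (hγd x hx hx0)
    exact (hγd x hx hx0).star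
  · exact Complex.continuous_conj.comp_continuousOn hγ'c
  · intro x hx
    rw [RCLike.norm_conj]
    exact hM x hx
  · intro x hx hx0
    rw [RCLike.norm_conj]
    exact h'M x hx hx0
  · intro x hx
    simp only [Pi.neg_apply, le_neg]
    have := h2 x hx
    linarith


set_option maxHeartbeats 2000000 in
/-- Stationary phase estimate with a singular amplitude: if `|∂ₓ^β γ(x)| ≲ |x|^{ν-β}` and
`f'' ≠ 0` on `supp γ`, then `|∫ γ(x) e^{iλf(x)} dx| ≲ λ^{-1/2}` for `λ ≥ 1`. -/
theorem stationary_phase_nondegenerate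
    (ν : ℝ) (hν : 0 ≤ ν) (γ : ℝ → ℂ) (f : ℝ → ℝ)
    (hγc : Continuous γ) (hγs : HasCompactSupport γ)
    (hγsm : ContDiffOn ℝ (⊤ : ℕ∞) γ ({(0 : ℝ)}ᶜ))
    (Cγ : ℕ → ℝ)
    (hb : ∀ (β : ℕ) (x : ℝ), x ≠ 0 →
      ‖iteratedDerivWithin β γ ({(0 : ℝ)}ᶜ) x‖ ≤ Cγ β * |x| ^ (ν - β))
    (hf : ContDiff ℝ (⊤ : ℕ∞) f)
    (hf'' : ∀ x ∈ tsupport γ, deriv (deriv f) x ≠ 0) :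
    ∃ C : ℝ, 0 < C ∧ ∀ lam : ℝ, 1 ≤ lam →
      ‖∫ x : ℝ, γ x * Complex.exp (Complex.I * lam * f x)‖
        ≤ C * lam ^ (-(1 / 2) : ℝ) := by
  classical
  -- derivatives of f
  have hfi : ContDiff ℝ ((⊤ : ℕ∞) : WithTop ℕ∞) f := hf.of_le (by simp)
  have hdiff : Differentiable ℝ f := (contDiff_infty_iff_deriv.mp hfi).1
  have hf1sm : ContDiff ℝ ((⊤ : ℕ∞) : WithTop ℕ∞) (deriv f) :=
    (contDiff_infty_iff_deriv.mp hfi).2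
  have hf1d : ∀ x, HasDerivAt f (deriv f x) x := fun x => (hdiff x).hasDerivAt
  have hf2d : ∀ x, HasDerivAt (deriv f) (deriv (deriv f) x) x := fun x =>
    ((contDiff_infty_iff_deriv.mp hf1sm).1 x).hasDerivAt
  have hf2c : Continuous (deriv (deriv f)) := hf1sm.continuous_deriv (by exact_mod_cast (le_top : (1:ℕ∞) ≤ ⊤))
  -- derivative of γ
  have hγd : ∀ x : ℝ, x ≠ 0 → HasDerivAt γ (deriv γ x) x := by
    intro x hx
    have hmem : {(0:ℝ)}ᶜ ∈ nhds x := isOpen_compl_singleton.mem_nhds hx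
    exact ((hγsm.contDiffAt hmem).differentiableAt (by simp)).hasDerivAt
  have hγ'cont : ContinuousOn (deriv γ) ({(0:ℝ)}ᶜ) :=
    hγsm.continuousOn_deriv_of_isOpen isOpen_compl_singleton (by simp)
  rcases (tsupport γ).eq_empty_or_nonempty with hKe | hKne
  · -- trivial case
    refine ⟨1, one_pos, fun lam hlam => ?_⟩
    have hz : ∀ x : ℝ, γ x = 0 := fun x =>
      image_eq_zero_of_notMem_tsupport (by rw [hKe]; exact notMem_empty x)
    have he : (fun x : ℝ => γ x * Complex.exp (Complex.I * lam * f x)) = fun _ => 0 := by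
      funext x; rw [hz x, zero_mul]
    rw [he, MeasureTheory.integral_zero, norm_zero]
    have : (0:ℝ) < lam ^ (-(1/2) : ℝ) := Real.rpow_pos_of_pos (by linarith) _
    linarith
  · obtain ⟨R0, hR0⟩ := hγs.isBounded.subset_closedBall 0
    obtain ⟨R, hRdef⟩ : ∃ R : ℝ, R = max R0 1 := ⟨_, rfl⟩
    have hR1 : (1:ℝ) ≤ R := by rw [hRdef]; exact le_max_right _ _
    have hRpos : (0:ℝ) < R := by linarith
    have hKR : tsupport γ ⊆ Icc (-R) R := by
      intro x hx
      have h1 := hR0 hx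
      rw [Real.closedBall_eq_Icc] at h1
      have hR0R : R0 ≤ R := by rw [hRdef]; exact le_max_left _ _
      exact ⟨by linarith [h1.1], by linarith [h1.2]⟩
    -- minimum of |f''| on the support
    obtain ⟨x₀, hx₀K, hx₀min⟩ := hγs.exists_isMinOn hKne (hf2c.abs.continuousOn)
    obtain ⟨c, hcdef⟩ : ∃ c : ℝ, c = |deriv (deriv f) x₀| := ⟨_, rfl⟩
    have hc : 0 < c := by rw [hcdef]; exact abs_pos.mpr (hf'' x₀ hx₀K)
    have hcmin : ∀ y ∈ tsupport γ, c ≤ |deriv (deriv f) y| := by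
      intro y hy; rw [hcdef]; exact hx₀min hy
    -- uniform continuity of f'' on [-R, R]
    have huc := isCompact_Icc.uniformContinuousOn_of_continuous
      (s := Icc (-R) R) hf2c.continuousOn
    obtain ⟨η, hη, hηe⟩ := (Metric.uniformContinuousOn_iff.mp huc) (c/2) (by positivity)
    -- grid
    obtain ⟨N, hNdef⟩ : ∃ N : ℕ, N = ⌈(2*R)/η⌉₊ + 1 := ⟨_, rfl⟩
    have hN0 : 0 < (N:ℝ) := by rw [hNdef]; positivity
    have hstep : 2*R/N < η := by
      have h1 : (2*R)/η ≤ (⌈(2*R)/η⌉₊ : ℝ) := Nat.le_ceil _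
      have h2 : ((⌈(2*R)/η⌉₊ : ℝ)) < (N:ℝ) := by
        rw [hNdef]; push_cast; linarith
      rw [div_lt_iff₀ hN0]
      have h3 : 2*R ≤ (⌈(2*R)/η⌉₊ : ℝ) * η := by
        rw [← div_le_iff₀ hη] at *
        linarith
      nlinarith
    obtain ⟨A, hAdef⟩ : ∃ A : ℕ → ℝ, A = fun i : ℕ => -R + (2*R/N) * (i:ℝ) := ⟨_, rfl⟩
    have hA0 : A 0 = -R := by rw [hAdef]; simp
    have hAN : A N = R := by
      rw [hAdef]
      have : (N:ℝ) ≠ 0 := hN0.ne'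
      field_simp
      ring
    have hAstep : ∀ i : ℕ, A (i+1) - A i = 2*R/N := by
      intro i; rw [hAdef]; push_cast; ring
    have hAmono : ∀ i : ℕ, A i ≤ A (i+1) := by
      intro i
      have := hAstep i
      have h0 : 0 ≤ 2*R/N := by positivity
      linarith
    have hArange : ∀ i : ℕ, i ≤ N → -R ≤ A i ∧ A i ≤ R := by
      intro i hi
      rw [hAdef]
      constructor
      · have : (0:ℝ) ≤ (2*R/N) * i := by positivity
        simp only []
        linarith
      · have hiN : (i:ℝ) ≤ (N:ℝ) := by exact_mod_cast hi
        have : (2*R/N) * i ≤ (2*R/N) * N := by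
          refine mul_le_mul_of_nonneg_left hiN (by positivity)
        have hNn : (2*R/N) * (N:ℝ) = 2*R := by field_simp
        simp only []
        nlinarith
    -- bound for γ and its derivative
    obtain ⟨M₀, hM₀⟩ := hγc.bounded_above_of_compact_support hγs
    obtain ⟨M, hMdef⟩ : ∃ M : ℝ, M = max (max 1 M₀) (max (Cγ 1) 0 * R ^ ν) := ⟨_, rfl⟩
    have hM1 : (1:ℝ) ≤ M := by rw [hMdef]; exact le_trans (le_max_left _ _) (le_max_left _ _)
    have hMpos : (0:ℝ) < M := by linarith
    have hMb : ∀ x, ‖γ x‖ ≤ M := by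
      intro x
      refine le_trans (hM₀ x) ?_
      rw [hMdef]
      exact le_trans (le_max_right 1 M₀) (le_max_left _ _)
    have hM' : ∀ x : ℝ, x ≠ 0 → |x| ≤ R → ‖deriv γ x‖ ≤ M / |x| := by
      intro x hx0 hxR
      have habs : 0 < |x| := abs_pos.mpr hx0
      have e1 : iteratedDerivWithin 1 γ ({(0:ℝ)}ᶜ) x = derivWithin γ ({(0:ℝ)}ᶜ) x :=
        by rw [iteratedDerivWithin_one]
      have e2 : derivWithin γ ({(0:ℝ)}ᶜ) x = deriv γ x :=
        derivWithin_of_isOpen isOpen_compl_singleton hx0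
      have h1 := hb 1 x hx0
      rw [e1, e2] at h1
      push_cast at h1
      have h3 : |x| ^ (ν - 1) = |x| ^ ν / |x| := by
        rw [Real.rpow_sub habs, Real.rpow_one]
      have h4 : |x| ^ ν ≤ R ^ ν := Real.rpow_le_rpow (abs_nonneg x) hxR hν
      have h5 : max (Cγ 1) 0 * (|x| ^ ν / |x|) ≤ (max (Cγ 1) 0 * R ^ ν) / |x| := by
        rw [mul_div_assoc']
        gcongr
      have h6 : (max (Cγ 1) 0 * R ^ ν) / |x| ≤ M / |x| := by
        gcongr
        rw [hMdef]
        exact le_max_right _ _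
      calc ‖deriv γ x‖ ≤ Cγ 1 * |x| ^ (ν - 1) := h1
        _ ≤ max (Cγ 1) 0 * |x| ^ (ν - 1) := by
            refine mul_le_mul_of_nonneg_right (le_max_left _ _) (by positivity)
        _ = max (Cγ 1) 0 * (|x| ^ ν / |x|) := by rw [h3]
        _ ≤ (max (Cγ 1) 0 * R ^ ν) / |x| := h5
        _ ≤ M / |x| := h6
    -- the constant
    obtain ⟨u, hudef⟩ : ∃ u : ℝ, u = Real.sqrt (c/2) := ⟨_, rfl⟩
    have hu0 : 0 < u := by rw [hudef]; exact Real.sqrt_pos.mpr (by positivity)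
    have huu : u * u = c/2 := by rw [hudef]; exact Real.mul_self_sqrt (by positivity)
    obtain ⟨KK, hKKdef⟩ : ∃ k : ℝ, k = M * (4 + 26 / u + 12 / (u*u)) := ⟨_, rfl⟩
    have hKK0 : 0 < KK := by rw [hKKdef]; positivity
    refine ⟨N * KK + 1, by positivity, fun lam hlam => ?_⟩
    have hlam0 : (0:ℝ) < lam := by linarith
    obtain ⟨s, hsdef⟩ : ∃ s : ℝ, s = Real.sqrt lam := ⟨_, rfl⟩
    have hss : s * s = lam := by rw [hsdef]; exact Real.mul_self_sqrt hlam0.le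
    have hs1 : 1 ≤ s := by
      rw [hsdef]
      have := Real.sqrt_le_sqrt hlam
      simpa using this
    have hs0 : 0 < s := by linarith
    have hrpow : lam ^ (-(1/2) : ℝ) = s⁻¹ := by
      rw [Real.rpow_neg hlam0.le, hsdef, Real.sqrt_eq_rpow]
    -- per-piece bound
    have hPiece : ∀ i : ℕ, i < N →
        ‖∫ x in A i..A (i+1), γ x * Complex.exp (Complex.I * lam * f x)‖ ≤ KK * s⁻¹ := by
      intro i hi
      have hrange := hArange i (le_of_lt hi)
      have hrange1 := hArange (i+1) hi
      have hmono := hAmono i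
      have hsubR : Icc (A i) (A (i+1)) ⊆ Icc (-R) R :=
        Icc_subset_Icc hrange.1 hrange1.2
      rcases (Icc (A i) (A (i+1)) ∩ tsupport γ).eq_empty_or_nonempty with hie | hin
      · -- γ vanishes on the piece
        have hzero : ∀ x ∈ uIcc (A i) (A (i+1)),
            γ x * Complex.exp (Complex.I * lam * f x) = 0 := by
          intro x hx
          rw [uIcc_of_le hmono] at hx
          have hxK : x ∉ tsupport γ := by
            intro hxK
            have : x ∈ Icc (A i) (A (i+1)) ∩ tsupport γ := ⟨hx, hxK⟩
            rw [hie] at this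
            exact notMem_empty x this
          rw [image_eq_zero_of_notMem_tsupport hxK, zero_mul]
        have : (∫ x in A i..A (i+1), γ x * Complex.exp (Complex.I * lam * f x))
            = ∫ x in A i..A (i+1), (0:ℂ) := intervalIntegral.integral_congr hzero
        rw [this]
        simp only [intervalIntegral.integral_zero, norm_zero]
        positivity
      · -- the piece meets the support
        obtain ⟨y₀, hy₀J, hy₀K⟩ := hin
        have hy₀c : c ≤ |deriv (deriv f) y₀| := hcmin y₀ hy₀K
        have hclose : ∀ x ∈ Icc (A i) (A (i+1)),
            |deriv (deriv f) x - deriv (deriv f) y₀| < c/2 := by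
          intro x hx
          have h1 : dist x y₀ < η := by
            rw [Real.dist_eq]
            have b1 : A i ≤ x := hx.1
            have b2 : x ≤ A (i+1) := hx.2
            have b3 : A i ≤ y₀ := hy₀J.1
            have b4 : y₀ ≤ A (i+1) := hy₀J.2
            have b5 := hAstep i
            rw [abs_lt]
            constructor <;> nlinarith
          have := hηe x (hsubR hx) y₀ (hsubR hy₀J) h1
          rwa [Real.dist_eq] at this
        obtain ⟨r, hrdef⟩ : ∃ r : ℝ, r = u * s⁻¹ := ⟨_, rfl⟩
        have hr0 : 0 < r := by rw [hrdef]; positivity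
        have hδ0 : (0:ℝ) < s⁻¹ := by positivity
        have hc2 : (0:ℝ) < c/2 := by positivity
        have hBeq : 2 * (2 * M * s⁻¹ + 2 * (6 * M / (lam * r) + 3 * M / (lam * (c/2) * s⁻¹)))
            + 2 * M * r / (c/2) = KK * s⁻¹ := by
          rw [hKKdef, hrdef, ← hss, ← huu]
          have hsne : s ≠ 0 := hs0.ne'
          have hune : u ≠ 0 := hu0.ne'
          field_simp
          ring
        have hsub0 : Icc (A i) (A (i+1)) \ {0} ⊆ ({(0:ℝ)}ᶜ) := fun x hx => hx.2
        rcases le_abs.mp hy₀c with hpos | hneg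
        · -- f'' ≥ c/2 on the piece
          have h2' : ∀ x ∈ Icc (A i) (A (i+1)), c/2 ≤ deriv (deriv f) x := by
            intro x hx
            have := hclose x hx
            rw [abs_lt] at this
            linarith
          have := interval_pos f (deriv f) (deriv (deriv f)) hf1d hf2d hf2c γ (deriv γ)
            lam r (c/2) M s⁻¹ (A i) (A (i+1)) hlam0 hr0 hc2 hδ0 hmono
            hγc.continuousOn (fun x _ hx0 => hγd x hx0)
            (hγ'cont.mono hsub0) (fun x _ => hMb x)
            (fun x hx hx0 => hM' x hx0 (by
              rw [abs_le]
              exact ⟨(hsubR hx).1, (hsubR hx).2⟩)) h2'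
          rw [hBeq] at this
          exact this
        · -- f'' ≤ -c/2 on the piece
          have h2' : ∀ x ∈ Icc (A i) (A (i+1)), deriv (deriv f) x ≤ -(c/2) := by
            intro x hx
            have := hclose x hx
            rw [abs_lt] at this
            linarith
          have := interval_neg f (deriv f) (deriv (deriv f)) hf1d hf2d hf2c γ (deriv γ)
            lam r (c/2) M s⁻¹ (A i) (A (i+1)) hlam0 hr0 hc2 hδ0 hmono
            hγc.continuousOn (fun x _ hx0 => hγd x hx0)
            (hγ'cont.mono hsub0) (fun x _ => hMb x)
            (fun x hx hx0 => hM' x hx0 (by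
              rw [abs_le]
              exact ⟨(hsubR hx).1, (hsubR hx).2⟩)) h2'
          rw [hBeq] at this
          exact this
    -- assemble the integral over ℝ
    have hFc : Continuous (fun x => γ x * Complex.exp (Complex.I * lam * f x)) := by
      have hfc : Continuous f := hdiff.continuous
      exact hγc.mul (Complex.continuous_exp.comp
        (continuous_const.mul (Complex.continuous_ofReal.comp hfc)))
    have hwhole : (∫ x : ℝ, γ x * Complex.exp (Complex.I * lam * f x))
        = ∫ x in (-R)..R, γ x * Complex.exp (Complex.I * lam * f x) := by
      rw [intervalIntegral.integral_of_le (by linarith), ← integral_Icc_eq_integral_Ioc]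
      refine (setIntegral_eq_integral_of_forall_compl_eq_zero ?_).symm
      intro x hx
      have hxK : x ∉ tsupport γ := fun h => hx (hKR h)
      rw [image_eq_zero_of_notMem_tsupport hxK, zero_mul]
    have hsum : (∫ x in (-R)..R, γ x * Complex.exp (Complex.I * lam * f x))
        = ∑ i ∈ Finset.range N, ∫ x in A i..A (i+1),
            γ x * Complex.exp (Complex.I * lam * f x) := by
      rw [← hA0, ← hAN]
      exact (intervalIntegral.sum_integral_adjacent_intervals
        (fun i _ => hFc.intervalIntegrable _ _)).symm
    rw [hwhole, hsum]
    calc ‖∑ i ∈ Finset.range N, ∫ x in A i..A (i+1),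
          γ x * Complex.exp (Complex.I * lam * f x)‖
        ≤ ∑ i ∈ Finset.range N, ‖∫ x in A i..A (i+1),
            γ x * Complex.exp (Complex.I * lam * f x)‖ := norm_sum_le _ _
      _ ≤ ∑ _i ∈ Finset.range N, KK * s⁻¹ := by
          refine Finset.sum_le_sum fun i hi => ?_
          exact hPiece i (Finset.mem_range.mp hi)
      _ = N * (KK * s⁻¹) := by
          rw [Finset.sum_const, Finset.card_range]
          simp [nsmul_eq_mul]
      _ ≤ (N * KK + 1) * lam ^ (-(1/2) : ℝ) := by
          rw [hrpow]
          have h1 : (0:ℝ) < s⁻¹ := by positivity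
          nlinarith [hN0, hKK0]
end
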